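/- arXiv:1702.02928 — 6 statements merged into one kernel-verified Lean document; each statement's English description precedes it below -/
import Mathlib

section
/- The matrix exponential map restricts to a homeomorphism from the space of n×n complex Hermitian matrices onto the space of n×n positive-definite Hermitian complex matrices (both equipped with the subspace topology from the space of all n×n complex matrices). -/
open scoped ComplexOrder


open Matrix in
private lemma posDef_of_spectrum {n : ℕ} {A : Matrix (Fin n) (Fin n) ℂ}
    (hA : A.IsHermitian) (h : ∀ x ∈ spectrum ℝ A, 0 < x) : A.PosDef := by
  have he : ∀ i, 0 < hA.eigenvalues i := fun i => h _ (hA.eigenvalues_mem_spectrum_real i)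
  have hps : A.PosSemidef := hA.posSemidef_iff_eigenvalues_nonneg.mpr fun i => (he i).le
  have hdet : A.det ≠ 0 := by
    rw [hA.det_eq_prod_eigenvalues]
    refine Finset.prod_ne_zero_iff.mpr fun i _ => ?_
    simpa using (he i).ne'
  refine posDef_iff_dotProduct_mulVec.mpr ⟨hA, fun x hx => ?_⟩
  refine lt_of_le_of_ne (hps.dotProduct_mulVec_nonneg x) (Ne.symm fun hc => hx ?_)
  have hx0 : A *ᵥ x = 0 := (hps.dotProduct_mulVec_zero_iff x).mp hc
  have hinj : Function.Injective (A.mulVec) :=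
    mulVec_injective_iff_isUnit.mpr ((isUnit_iff_isUnit_det _).mpr hdet.isUnit)
  exact hinj (show A *ᵥ x = A *ᵥ 0 by simpa using hx0)

section Aux
open Matrix NormedSpace
open scoped Matrix.Norms.L2Operator

variable {n : ℕ}

noncomputable instance auxCompleteSpace : CompleteSpace (Matrix (Fin n) (Fin n) ℂ) :=
  FiniteDimensional.complete ℂ _

noncomputable instance auxCStar : CStarAlgebra (Matrix (Fin n) (Fin n) ℂ) where

private lemma posDef_exp (A : Matrix (Fin n) (Fin n) ℂ) (hA : A.IsHermitian) :
    (NormedSpace.exp A).PosDef := by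
  have hsa : IsSelfAdjoint A := hA
  rw [← CFC.real_exp_eq_normedSpace_exp hsa]
  refine posDef_of_spectrum (cfc_predicate Real.exp A) fun x hx => ?_
  rw [cfc_map_spectrum Real.exp A] at hx
  obtain ⟨y, -, rfl⟩ := hx
  exact Real.exp_pos y

private lemma spectrum_pos_of_posDef {A : Matrix (Fin n) (Fin n) ℂ} (hA : A.PosDef) :
    ∀ x ∈ spectrum ℝ A, (0:ℝ) < x := by
  intro x hx
  rw [hA.isHermitian.spectrum_real_eq_range_eigenvalues] at hx
  obtain ⟨i, rfl⟩ := hx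
  exact hA.eigenvalues_pos i

noncomputable instance auxNormOne [NeZero n] : NormOneClass (Matrix (Fin n) (Fin n) ℂ) where
  norm_one := by rw [Matrix.cstar_norm_def, _root_.map_one]; exact norm_one

private lemma norm_log_le [NeZero n] {A : Matrix (Fin n) (Fin n) ℂ} (hA : A.PosDef) {C : ℝ} (hC : 1 ≤ C)
    (h1 : ‖A‖ ≤ C) (h2 : ‖A⁻¹‖ ≤ C) : ‖CFC.log A‖ ≤ Real.log C := by
  apply norm_cfc_le (Real.log_nonneg hC)
  intro x hx
  have hx0 : 0 < x := spectrum_pos_of_posDef hA x hx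
  have hxC : x ≤ C := ((le_abs_self x).trans (spectrum.norm_le_norm_of_mem hx)).trans h1
  have hxinv : x⁻¹ ≤ C := by
    have hu : IsUnit A := hA.isUnit
    have hmem : x⁻¹ ∈ spectrum ℝ A⁻¹ := by
      have := (spectrum.inv_mem_iff (r := Units.mk0 x hx0.ne') (a := hu.unit)).mp
        (by simpa [hu.unit_spec] using hx)
      simpa [Matrix.coe_units_inv, hu.unit_spec] using this
    exact ((le_abs_self _).trans (spectrum.norm_le_norm_of_mem hmem)).trans h2
  rw [Real.norm_eq_abs, abs_le]
  have hCpos : (0:ℝ) < C := lt_of_lt_of_le one_pos hC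
  constructor
  · rw [← Real.log_inv]
    apply Real.log_le_log (by positivity)
    rw [inv_le_comm₀ hCpos hx0]
    exact hxinv
  · exact Real.log_le_log hx0 hxC

end Aux

open scoped MatrixOrder in
private theorem key (n : ℕ) [NeZero n] :
    ∃ e : {A : Matrix (Fin n) (Fin n) ℂ // A.IsHermitian} ≃ₜ
        {A : Matrix (Fin n) (Fin n) ℂ // A.PosDef},
      ∀ A : {A : Matrix (Fin n) (Fin n) ℂ // A.IsHermitian},
        ((e A : {A : Matrix (Fin n) (Fin n) ℂ // A.PosDef}) : Matrix (Fin n) (Fin n) ℂ) =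
          NormedSpace.exp (A : Matrix (Fin n) (Fin n) ℂ) := by
  haveI : ProperSpace (Matrix (Fin n) (Fin n) ℂ) :=
    FiniteDimensional.proper ℂ (Matrix (Fin n) (Fin n) ℂ)
  letI : NormedAlgebra ℚ (Matrix (Fin n) (Fin n) ℂ) := .restrictScalars ℚ ℂ _
  have hee : (NormedSpace.exp : Matrix (Fin n) (Fin n) ℂ → Matrix (Fin n) (Fin n) ℂ)
      = NormedSpace.exp := rfl
  refine ⟨{ toFun := fun A => ⟨NormedSpace.exp A.1, posDef_exp A.1 A.2⟩
            invFun := fun B => ⟨CFC.log B.1, IsSelfAdjoint.log⟩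
            left_inv := fun A => Subtype.ext (by
              show CFC.log (NormedSpace.exp A.1) = A.1
              rw [hee]
              exact CFC.log_exp A.1 A.2.isSelfAdjoint)
            right_inv := fun B => Subtype.ext (by
              show NormedSpace.exp (CFC.log B.1) = B.1
              rw [hee]
              exact CFC.exp_log B.1 B.2.isStrictlyPositive)
            continuous_toFun := Continuous.subtype_mk
              (NormedSpace.exp_continuous.comp continuous_subtype_val) _
            continuous_invFun := ?_ }, fun A => rfl⟩
  refine continuous_iff_seqContinuous.mpr fun u B hu => ?_
  have hu' : Filter.Tendsto (fun k => (u k).1) Filter.atTop (nhds B.1) :=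
    ((continuous_subtype_val.tendsto B).comp hu)
  rw [tendsto_subtype_rng]
  have hinv : Filter.Tendsto (fun k => ((u k).1)⁻¹) Filter.atTop (nhds (B.1⁻¹)) := by
    refine ((continuousAt_matrix_inv B.1 ?_).tendsto).comp hu'
    rw [Ring.inverse_eq_inv']
    exact continuousAt_inv₀ (by exact_mod_cast B.2.det_pos.ne')
  apply Filter.tendsto_of_subseq_tendsto
  intro ns hns
  obtain ⟨C1, hC1⟩ := ((hu'.comp hns).norm).bddAbove_range
  obtain ⟨C2, hC2⟩ := ((hinv.comp hns).norm).bddAbove_range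
  set C : ℝ := max 1 (max C1 C2) with hCdef
  have hC : 1 ≤ C := le_max_left _ _
  have hbound : ∀ k, CFC.log ((u (ns k)).1) ∈ Metric.closedBall (0 : Matrix (Fin n) (Fin n) ℂ)
      (Real.log C) := by
    intro k
    rw [Metric.mem_closedBall, dist_zero_right]
    refine norm_log_le (u (ns k)).2 hC ?_ ?_
    · exact le_trans (hC1 ⟨k, rfl⟩) (le_trans (le_max_left _ _) (le_max_right _ _))
    · exact le_trans (hC2 ⟨k, rfl⟩) (le_trans (le_max_right _ _) (le_max_right _ _))
  obtain ⟨L, -, φ, hφ, hLt⟩ :=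
    tendsto_subseq_of_bounded Metric.isBounded_closedBall hbound
  have hLsa : IsSelfAdjoint L := by
    have hcl : IsClosed {A : Matrix (Fin n) (Fin n) ℂ | star A = A} :=
      isClosed_eq continuous_star continuous_id
    exact hcl.mem_of_tendsto hLt (Filter.Eventually.of_forall fun k => IsSelfAdjoint.log)
  have hL : NormedSpace.exp L = B.1 := by
    have h1 : Filter.Tendsto (fun j => NormedSpace.exp (CFC.log ((u (ns (φ j))).1)))
        Filter.atTop (nhds (NormedSpace.exp L)) :=
      (NormedSpace.exp_continuous.tendsto L).comp hLt
    have h2 : (fun j => NormedSpace.exp (CFC.log ((u (ns (φ j))).1)))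
        = fun j => (u (ns (φ j))).1 := by
      funext j
      exact CFC.exp_log _
        (u (ns (φ j))).2.isStrictlyPositive
    rw [h2] at h1
    exact tendsto_nhds_unique h1 (hu'.comp (hns.comp hφ.tendsto_atTop))
  refine ⟨φ, ?_⟩
  have hBL : CFC.log B.1 = L := by rw [← hL, CFC.log_exp L hLsa]
  show Filter.Tendsto (fun j => CFC.log ((u (ns (φ j))).1)) Filter.atTop (nhds (CFC.log B.1))
  rw [hBL]
  exact hLt


/-- The matrix exponential restricts to a homeomorphism from the space of `n × n`
complex Hermitian matrices onto the space of `n × n` positive-definite (Hermitian)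
complex matrices, both with the subspace topology from `Matrix (Fin n) (Fin n) ℂ`. -/
theorem matrix_exp_homeomorph_hermitian_posDef (n : ℕ) :
    ∃ e : {A : Matrix (Fin n) (Fin n) ℂ // A.IsHermitian} ≃ₜ
        {A : Matrix (Fin n) (Fin n) ℂ // A.PosDef},
      ∀ A : {A : Matrix (Fin n) (Fin n) ℂ // A.IsHermitian},
        ((e A : {A : Matrix (Fin n) (Fin n) ℂ // A.PosDef}) : Matrix (Fin n) (Fin n) ℂ) =
          NormedSpace.exp (A : Matrix (Fin n) (Fin n) ℂ) := by
  rcases Nat.eq_zero_or_pos n with rfl | hn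
  · haveI : Subsingleton (Matrix (Fin 0) (Fin 0) ℂ) :=
      inferInstanceAs (Subsingleton (Fin 0 → Fin 0 → ℂ))
    have h0 : (0 : Matrix (Fin 0) (Fin 0) ℂ).PosDef := by
      refine ⟨Matrix.isHermitian_zero, fun x hx => absurd (Subsingleton.elim x 0) hx⟩
    refine ⟨{ toFun := fun _ => ⟨0, h0⟩
              invFun := fun _ => ⟨0, Matrix.isHermitian_zero⟩
              left_inv := fun A => Subsingleton.elim _ _
              right_inv := fun B => Subsingleton.elim _ _
              continuous_toFun := continuous_const
              continuous_invFun := continuous_const }, fun A => Subsingleton.elim _ _⟩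
  · haveI : NeZero n := ⟨hn.ne'⟩
    exact key n
end

section
/- The multiplication map (U, R) ↦ U·R is a homeomorphism from the product of the unitary group U(n) with the space of n×n positive-definite Hermitian complex matrices onto the general linear group GL_n(ℂ) (all spaces carrying the subspace topology from the space of n×n complex matrices). -/
set_option maxHeartbeats 1000000

open scoped ComplexOrder
open Matrix Filter Topology

namespace PolarProofAux

open scoped MatrixOrder

attribute [local instance] Complex.orderClosedTopology

variable {n : ℕ}

instance : FirstCountableTopology (Matrix (Fin n) (Fin n) ℂ) :=
  inferInstanceAs (FirstCountableTopology (Fin n → Fin n → ℂ))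

lemma posDef_of_posSemidef_isUnit {M : Matrix (Fin n) (Fin n) ℂ}
    (hM : M.PosSemidef) (h : IsUnit M) : M.PosDef := by
  refine posDef_iff_dotProduct_mulVec.mpr ⟨hM.1, fun x hx => ?_⟩
  refine lt_of_le_of_ne (hM.dotProduct_mulVec_nonneg x) (fun hc => hx ?_)
  have h0 : M *ᵥ x = 0 := (hM.dotProduct_mulVec_zero_iff x).mp hc.symm
  have h1 := congrArg (fun v => M⁻¹ *ᵥ v) h0
  simpa [Matrix.mulVec_mulVec,
    Matrix.nonsing_inv_mul M ((Matrix.isUnit_iff_isUnit_det M).mp h),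
    Matrix.one_mulVec] using h1

/-- The positive (semi)definite factor in the polar decomposition. -/
noncomputable def polarR (A : Matrix (Fin n) (Fin n) ℂ) : Matrix (Fin n) (Fin n) ℂ :=
  CFC.sqrt (Aᴴ * A)

lemma polarR_posSemidef (A : Matrix (Fin n) (Fin n) ℂ) : (polarR A).PosSemidef :=
  (CFC.sqrt_nonneg _).posSemidef

lemma polarR_sq (A : Matrix (Fin n) (Fin n) ℂ) : polarR A ^ 2 = Aᴴ * A :=
  CFC.sq_sqrt _ (Matrix.posSemidef_conjTranspose_mul_self A).nonneg

lemma polarR_posDef {A : Matrix (Fin n) (Fin n) ℂ} (hA : IsUnit A) : (polarR A).PosDef := by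
  apply posDef_of_posSemidef_isUnit (polarR_posSemidef A)
  have h2 : IsUnit (Aᴴ * A) := ((Matrix.isUnit_conjTranspose (A := A)).mpr hA).mul hA
  rw [Matrix.isUnit_iff_isUnit_det]
  have h3 : IsUnit ((polarR A).det ^ 2) := by
    rw [← Matrix.det_pow, polarR_sq]
    exact (Matrix.isUnit_iff_isUnit_det _).mp h2
  exact (isUnit_pow_iff two_ne_zero).mp h3

lemma polarR_det_isUnit {A : Matrix (Fin n) (Fin n) ℂ} (hA : IsUnit A) :
    IsUnit (polarR A).det :=
  (Matrix.isUnit_iff_isUnit_det _).mp (polarR_posDef hA).isUnit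

lemma polar_mem_unitary {A : Matrix (Fin n) (Fin n) ℂ} (hA : IsUnit A) :
    A * (polarR A)⁻¹ ∈ Matrix.unitaryGroup (Fin n) ℂ := by
  have hRd := polarR_det_isUnit hA
  have hH : (polarR A)ᴴ = polarR A := (polarR_posDef hA).1
  rw [Matrix.mem_unitaryGroup_iff']
  have : star (A * (polarR A)⁻¹) * (A * (polarR A)⁻¹)
      = (polarR A)⁻¹ * ((polarR A * polarR A) * (polarR A)⁻¹) := by
    rw [Matrix.star_eq_conjTranspose, Matrix.conjTranspose_mul,
      Matrix.conjTranspose_nonsing_inv, hH, ← sq, polarR_sq]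
    simp only [Matrix.mul_assoc]
  rw [this, Matrix.mul_assoc, Matrix.mul_nonsing_inv _ hRd, Matrix.mul_one,
    Matrix.nonsing_inv_mul _ hRd]

lemma polar_unitary_mul {A : Matrix (Fin n) (Fin n) ℂ} (hA : IsUnit A) :
    A * (polarR A)⁻¹ * polarR A = A := by
  rw [Matrix.mul_assoc, Matrix.nonsing_inv_mul _ (polarR_det_isUnit hA), Matrix.mul_one]

lemma polarR_unitary_mul_posDef {U R : Matrix (Fin n) (Fin n) ℂ}
    (hU : U ∈ Matrix.unitaryGroup (Fin n) ℂ) (hR : R.PosDef) :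
    polarR (U * R) = R := by
  have hsU : star U * U = 1 := (Unitary.mem_iff.mp hU).1
  have h1 : R ^ 2 = (U * R)ᴴ * (U * R) := by
    rw [Matrix.conjTranspose_mul, Matrix.mul_assoc, ← Matrix.mul_assoc Uᴴ U R,
      ← Matrix.star_eq_conjTranspose U, hsU, Matrix.one_mul, hR.1, sq]
  show CFC.sqrt ((U * R)ᴴ * (U * R)) = R
  exact (CFC.sqrt_eq_iff _ _ (Matrix.posSemidef_conjTranspose_mul_self _).nonneg
    hR.posSemidef.nonneg).mpr (by rw [← sq, h1])

lemma isUnit_of_mem_unitary {U : Matrix (Fin n) (Fin n) ℂ}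
    (hU : U ∈ Matrix.unitaryGroup (Fin n) ℂ) : IsUnit U :=
  ⟨⟨U, star U, (Unitary.mem_iff.mp hU).2, (Unitary.mem_iff.mp hU).1⟩, rfl⟩

/-- The polar decomposition as an equivalence. -/
noncomputable def polarEquiv (n : ℕ) :
    (Matrix.unitaryGroup (Fin n) ℂ × {R : Matrix (Fin n) (Fin n) ℂ // R.PosDef}) ≃
      {A : Matrix (Fin n) (Fin n) ℂ // IsUnit A} where
  toFun p := ⟨(p.1 : Matrix (Fin n) (Fin n) ℂ) * (p.2 : Matrix (Fin n) (Fin n) ℂ),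
    (isUnit_of_mem_unitary p.1.2).mul p.2.2.isUnit⟩
  invFun A := (⟨(A : Matrix (Fin n) (Fin n) ℂ) * (polarR (A : Matrix (Fin n) (Fin n) ℂ))⁻¹,
      polar_mem_unitary A.2⟩,
    ⟨polarR (A : Matrix (Fin n) (Fin n) ℂ), polarR_posDef A.2⟩)
  left_inv p := by
    obtain ⟨⟨U, hU⟩, ⟨R, hR⟩⟩ := p
    have hpR : polarR (U * R) = R := polarR_unitary_mul_posDef hU hR
    have hRd : IsUnit R.det := (Matrix.isUnit_iff_isUnit_det _).mp hR.isUnit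
    refine Prod.ext (Subtype.ext ?_) (Subtype.ext ?_)
    · show U * R * (polarR (U * R))⁻¹ = U
      rw [hpR, Matrix.mul_assoc, Matrix.mul_nonsing_inv _ hRd, Matrix.mul_one]
    · exact hpR
  right_inv A := by
    obtain ⟨A, hA⟩ := A
    exact Subtype.ext (polar_unitary_mul hA)

lemma isCompact_unitary :
    IsCompact (Matrix.unitaryGroup (Fin n) ℂ : Set (Matrix (Fin n) (Fin n) ℂ)) := by
  have hK : IsCompact ((Set.univ.pi fun _ : Fin n => Set.univ.pi
      fun _ : Fin n => Metric.closedBall (0 : ℂ) 1) : Set (Matrix (Fin n) (Fin n) ℂ)) :=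
    isCompact_univ_pi fun _ => isCompact_univ_pi fun _ => isCompact_closedBall 0 1
  refine hK.of_isClosed_subset ?_ ?_
  · have he : (Matrix.unitaryGroup (Fin n) ℂ : Set (Matrix (Fin n) (Fin n) ℂ))
        = (fun M : Matrix (Fin n) (Fin n) ℂ => (star M * M, M * star M)) ⁻¹' {((1 : Matrix (Fin n) (Fin n) ℂ), (1 : Matrix (Fin n) (Fin n) ℂ))} := by
      ext M
      simp only [Set.mem_preimage, Set.mem_singleton_iff, Prod.mk.injEq]
      exact Iff.rfl
    rw [he]
    have hc : Continuous fun M : Matrix (Fin n) (Fin n) ℂ => (star M * M, M * star M) :=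
      ((continuous_star.matrix_mul continuous_id).prodMk
        (continuous_id.matrix_mul continuous_star))
    exact IsClosed.preimage hc isClosed_singleton
  · intro M hM
    rw [Set.mem_univ_pi]
    intro i
    rw [Set.mem_univ_pi]
    intro j
    rw [Metric.mem_closedBall, dist_zero_right]
    exact entry_norm_bound_of_unitary hM i j

lemma isClosed_posSemidef :
    IsClosed {M : Matrix (Fin n) (Fin n) ℂ | M.PosSemidef} := by
  have h1 : IsClosed {M : Matrix (Fin n) (Fin n) ℂ | M.IsHermitian} := by
    have : {M : Matrix (Fin n) (Fin n) ℂ | M.IsHermitian}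
        = {M : Matrix (Fin n) (Fin n) ℂ | Mᴴ = M} := rfl
    rw [this]
    exact isClosed_eq (continuous_id.matrix_conjTranspose) continuous_id
  have h2 : IsClosed {M : Matrix (Fin n) (Fin n) ℂ |
      ∀ x : Fin n → ℂ, 0 ≤ star x ⬝ᵥ M *ᵥ x} := by
    have : {M : Matrix (Fin n) (Fin n) ℂ | ∀ x : Fin n → ℂ, 0 ≤ star x ⬝ᵥ M *ᵥ x}
        = ⋂ x : Fin n → ℂ, {M : Matrix (Fin n) (Fin n) ℂ | 0 ≤ star x ⬝ᵥ M *ᵥ x} := by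
      ext M; simp
    rw [this]
    refine isClosed_iInter fun x => ?_
    exact isClosed_le continuous_const
      (continuous_const.dotProduct (continuous_id.matrix_mulVec continuous_const))
  have : {M : Matrix (Fin n) (Fin n) ℂ | M.PosSemidef}
      = {M : Matrix (Fin n) (Fin n) ℂ | M.IsHermitian} ∩
        {M : Matrix (Fin n) (Fin n) ℂ | ∀ x : Fin n → ℂ, 0 ≤ star x ⬝ᵥ M *ᵥ x} := by
    ext M
    exact ⟨fun h => ⟨h.1, h.dotProduct_mulVec_nonneg⟩, fun h => .of_dotProduct_mulVec_nonneg h.1 h.2⟩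
  rw [this]
  exact h1.inter h2

end PolarProofAux

open PolarProofAux

/-- Multiplication `(U, R) ↦ U * R` is a homeomorphism from the product of the
unitary group `U(n)` with the space of `n × n` positive-definite Hermitian complex
matrices onto the group of invertible `n × n` complex matrices (all with the
subspace topology from `Matrix (Fin n) (Fin n) ℂ`). -/
theorem polar_decomposition_homeomorph (n : ℕ) :
    ∃ e : (Matrix.unitaryGroup (Fin n) ℂ × {R : Matrix (Fin n) (Fin n) ℂ // R.PosDef}) ≃ₜ
        {A : Matrix (Fin n) (Fin n) ℂ // IsUnit A},
      ∀ p : Matrix.unitaryGroup (Fin n) ℂ × {R : Matrix (Fin n) (Fin n) ℂ // R.PosDef},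
        ((e p : {A : Matrix (Fin n) (Fin n) ℂ // IsUnit A}) : Matrix (Fin n) (Fin n) ℂ) =
          (p.1 : Matrix (Fin n) (Fin n) ℂ) * (p.2 : Matrix (Fin n) (Fin n) ℂ) := by
  classical
  refine ⟨{ toEquiv := polarEquiv n, continuous_toFun := ?_, continuous_invFun := ?_ },
    fun p => rfl⟩
  · apply Continuous.subtype_mk
    exact (continuous_subtype_val.comp continuous_fst).matrix_mul
      (continuous_subtype_val.comp continuous_snd)
  · rw [continuous_iff_seqContinuous]
    intro Aseq Alim hlim
    apply Filter.tendsto_of_subseq_tendsto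
    intro ns hns
    set Useq : ℕ → Matrix (Fin n) (Fin n) ℂ :=
      fun k => ((Aseq k : Matrix (Fin n) (Fin n) ℂ) * (polarR (Aseq k : Matrix (Fin n) (Fin n) ℂ))⁻¹) with hUseq
    have hUmem : ∀ k, Useq k ∈ Matrix.unitaryGroup (Fin n) ℂ :=
      fun k => polar_mem_unitary (Aseq k).2
    obtain ⟨U', hU'mem, φ, hφ, hUconv⟩ :=
      isCompact_unitary.tendsto_subseq (x := Useq ∘ ns) (fun k => hUmem _)
    have hAconv : Tendsto (fun k => ((Aseq (ns (φ k))) : Matrix (Fin n) (Fin n) ℂ))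
        atTop (𝓝 (Alim : Matrix (Fin n) (Fin n) ℂ)) :=
      (continuous_subtype_val.tendsto _).comp (hlim.comp ((hns.comp hφ.tendsto_atTop)))
    -- representation of the positive factor
    have hRrepr : ∀ m, polarR (Aseq m : Matrix (Fin n) (Fin n) ℂ)
        = star (Useq m) * (Aseq m : Matrix (Fin n) (Fin n) ℂ) := by
      intro m
      have h1 : star (Useq m) * Useq m = 1 := (Unitary.mem_iff.mp (hUmem m)).1
      have h2 : Useq m * polarR (Aseq m : Matrix (Fin n) (Fin n) ℂ)
          = (Aseq m : Matrix (Fin n) (Fin n) ℂ) := polar_unitary_mul (Aseq m).2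
      calc polarR (Aseq m : Matrix (Fin n) (Fin n) ℂ)
          = (star (Useq m) * Useq m) * polarR (Aseq m : Matrix (Fin n) (Fin n) ℂ) := by
            rw [h1, Matrix.one_mul]
        _ = star (Useq m) * (Useq m * polarR (Aseq m : Matrix (Fin n) (Fin n) ℂ)) := by
            rw [Matrix.mul_assoc]
        _ = star (Useq m) * (Aseq m : Matrix (Fin n) (Fin n) ℂ) := by rw [h2]
    set R' : Matrix (Fin n) (Fin n) ℂ := star U' * (Alim : Matrix (Fin n) (Fin n) ℂ) with hR'
    have hRconv : Tendsto (fun k => polarR ((Aseq (ns (φ k))) : Matrix (Fin n) (Fin n) ℂ))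
        atTop (𝓝 R') := by
      have hstar : Tendsto (fun k => star (Useq (ns (φ k)))) atTop (𝓝 (star U')) :=
        (continuous_star.tendsto _).comp hUconv
      have hmc : Continuous fun q : Matrix (Fin n) (Fin n) ℂ × Matrix (Fin n) (Fin n) ℂ =>
          q.1 * q.2 := (continuous_fst :
            Continuous fun q : Matrix (Fin n) (Fin n) ℂ × Matrix (Fin n) (Fin n) ℂ =>
              q.1).matrix_mul continuous_snd
      have := (hmc.tendsto (star U', (Alim : Matrix (Fin n) (Fin n) ℂ))).comp
        (hstar.prodMk_nhds hAconv)
      simpa only [Function.comp_def, hRrepr] using this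
    have hR'psd : R'.PosSemidef := by
      have := isClosed_posSemidef.mem_of_tendsto hRconv
        (Eventually.of_forall fun k => polarR_posSemidef _)
      exact this
    have hU'g : U' ∈ Matrix.unitaryGroup (Fin n) ℂ := hU'mem
    have hU'iff := Unitary.mem_iff.mp hU'g
    have hR'unit : IsUnit R' := by
      refine IsUnit.mul ?_ Alim.2
      exact ⟨⟨star U', U', hU'iff.1, hU'iff.2⟩, rfl⟩
    have hR'pd : R'.PosDef := posDef_of_posSemidef_isUnit hR'psd hR'unit
    have hmul : U' * R' = (Alim : Matrix (Fin n) (Fin n) ℂ) := by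
      rw [hR', ← Matrix.mul_assoc, hU'iff.2, Matrix.one_mul]
    have hkey : (polarEquiv n).symm Alim = (⟨U', hU'g⟩, ⟨R', hR'pd⟩) := by
      rw [Equiv.symm_apply_eq]
      exact (Subtype.ext hmul).symm
    refine ⟨φ, ?_⟩
    have hgoal : Tendsto (fun k => (polarEquiv n).symm (Aseq (ns (φ k)))) atTop
        (𝓝 ((⟨U', hU'g⟩, ⟨R', hR'pd⟩) :
          Matrix.unitaryGroup (Fin n) ℂ × {R : Matrix (Fin n) (Fin n) ℂ // R.PosDef})) := by
      refine Filter.Tendsto.prodMk_nhds ?_ ?_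
      · exact tendsto_subtype_rng.mpr hUconv
      · exact tendsto_subtype_rng.mpr hRconv
    simp only [Equiv.invFun_as_coe, Function.comp_def]
    rw [hkey]
    exact hgoal
end

section
/- Let n ≥ 1, let X be a compact Hausdorff space and Y ⊆ X a closed subspace. Suppose f : X → C(S¹, ℂⁿ) is continuous (C(S¹, ℂⁿ) with the compact-open topology) with f(x)(z) ≠ 0 for all x ∈ X and z ∈ S¹, and suppose there is c ≥ 0 such that f(y) is a Laurent-polynomial loop of degree ≤ c for every y ∈ Y. Then there exist an integer d > 0 and a continuous map g : X → C(S¹, ℂⁿ) such that: g(x) is a Laurent-polynomial loop of degree ≤ d with g(x)(z) ≠ 0 for all x ∈ X, z ∈ S¹; g(y) = f(y) for all y ∈ Y; and (1−t)·f(x)(z) + t·g(x)(z) ≠ 0 for all t ∈ [0,1], x ∈ X, z ∈ S¹ (so f is homotopic to g through nowhere-vanishing loops, by a homotopy constant on Y). -/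
/-- The unit circle in `ℂ`, with the subspace topology. -/
abbrev Circle1 : Type := {z : ℂ // ‖z‖ = 1}

/-- A continuous loop `γ : S¹ → ℂⁿ` is a Laurent-polynomial loop of degree `≤ d`
if `γ(z) = ∑_{j=-d}^{d} a_j zʲ` for some vectors `a_j ∈ ℂⁿ`. -/
def IsLaurentLoopOfDeg {n : ℕ} (d : ℕ) (γ : C(Circle1, Fin n → ℂ)) : Prop :=
  ∃ a : ℤ → (Fin n → ℂ), ∀ z : Circle1,
    γ z = ∑ j ∈ Finset.Icc (-(d : ℤ)) (d : ℤ), (z : ℂ) ^ j • a j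

namespace BauerAux

lemma coe_ne_zero (z : Circle1) : (z : ℂ) ≠ 0 := by
  intro h
  have h2 := z.2
  rw [h] at h2
  simp at h2

instance : CompactSpace Circle1 := by
  have h : {z : ℂ | ‖z‖ = 1} = Metric.sphere (0:ℂ) 1 := by
    ext z; simp [Complex.dist_eq]
  have hc : IsCompact {z : ℂ | ‖z‖ = 1} := h ▸ isCompact_sphere 0 1
  exact isCompact_iff_compactSpace.mp hc

lemma conj_coe (z : Circle1) : (starRingEnd ℂ) (z : ℂ) = (z : ℂ)⁻¹ := by
  apply eq_inv_of_mul_eq_one_left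
  rw [mul_comm, Complex.mul_conj]
  norm_cast
  rw [Complex.normSq_eq_norm_sq, z.2]
  norm_num

noncomputable def mono (j : ℤ) : C(Circle1, ℂ) :=
  ⟨fun z => (z : ℂ) ^ j, by
    apply Continuous.zpow₀ (by continuity)
    intro z; exact Or.inl (coe_ne_zero z)⟩

@[simp] lemma mono_apply (j : ℤ) (z : Circle1) : mono j z = (z : ℂ) ^ j := rfl

lemma mono_mul (j k : ℤ) : mono j * mono k = mono (j + k) := by
  ext z
  simp [zpow_add₀ (coe_ne_zero z)]

lemma star_mono (j : ℤ) : star (mono j) = mono (-j) := by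
  ext z
  simp only [ContinuousMap.star_apply, mono_apply]
  rw [show (star ((z:ℂ)^j)) = (starRingEnd ℂ) ((z:ℂ)^j) from rfl, map_zpow₀, conj_coe,
    inv_zpow, ← zpow_neg]



noncomputable def laurentSet : Submodule ℂ C(Circle1, ℂ) :=
  Submodule.span ℂ (Set.range mono)

noncomputable def laurentAlg : StarSubalgebra ℂ C(Circle1, ℂ) where
  carrier := laurentSet
  add_mem' := fun ha hb => laurentSet.add_mem ha hb
  zero_mem' := laurentSet.zero_mem
  mul_mem' := by
    intro a b ha hb
    have h1 : a * b ∈ Submodule.span ℂ (Set.range mono) * Submodule.span ℂ (Set.range mono) :=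
      Submodule.mul_mem_mul ha hb
    rw [Submodule.span_mul_span] at h1
    refine Submodule.span_le.mpr ?_ h1
    rintro x ⟨u, hu, v, hv, rfl⟩
    obtain ⟨j, rfl⟩ := hu
    obtain ⟨k, rfl⟩ := hv
    show mono j * mono k ∈ _
    rw [mono_mul]
    exact Submodule.subset_span ⟨j + k, rfl⟩
  one_mem' := by
    have : (1 : C(Circle1, ℂ)) = mono 0 := by ext z; simp
    rw [this]; exact Submodule.subset_span ⟨0, rfl⟩
  algebraMap_mem' := by
    intro c
    have : algebraMap ℂ C(Circle1, ℂ) c = c • mono 0 := by ext z; simp [Algebra.algebraMap_eq_smul_one]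
    rw [this]
    exact laurentSet.smul_mem c (Submodule.subset_span ⟨0, rfl⟩)
  star_mem' := by
    intro a ha
    have ha' : a ∈ laurentSet := ha
    show star a ∈ laurentSet
    clear ha
    induction ha' using Submodule.span_induction with
    | mem x hx =>
        obtain ⟨j, rfl⟩ := hx
        rw [star_mono]
        exact Submodule.subset_span ⟨-j, rfl⟩
    | zero => simp only [star_zero]; exact laurentSet.zero_mem
    | add x y _ _ hx hy => rw [star_add]; exact laurentSet.add_mem hx hy
    | smul c x _ hx => rw [star_smul]; exact laurentSet.smul_mem _ hx

lemma laurentAlg_dense : laurentAlg.topologicalClosure = ⊤ := by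
  apply ContinuousMap.starSubalgebra_topologicalClosure_eq_top_of_separatesPoints
  intro z w hzw
  refine ⟨mono 1, ⟨mono 1, Submodule.subset_span ⟨1, rfl⟩, rfl⟩, ?_⟩
  simpa using fun h => hzw (Subtype.ext (by simpa using h))

/-- degree-monotonicity for scalar representations -/
lemma scalar_rep_mono {g : C(Circle1, ℂ)} {d d' : ℕ} (hdd : d ≤ d')
    (h : ∃ a : ℤ → ℂ, ∀ z : Circle1, g z = ∑ j ∈ Finset.Icc (-(d:ℤ)) (d:ℤ), (z:ℂ) ^ j * a j) :
    ∃ a : ℤ → ℂ, ∀ z : Circle1, g z = ∑ j ∈ Finset.Icc (-(d':ℤ)) (d':ℤ), (z:ℂ) ^ j * a j := by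
  obtain ⟨a, ha⟩ := h
  refine ⟨fun j => if j ∈ Finset.Icc (-(d:ℤ)) (d:ℤ) then a j else 0, fun z => ?_⟩
  rw [ha z]
  have hsub : Finset.Icc (-(d:ℤ)) (d:ℤ) ⊆ Finset.Icc (-(d':ℤ)) (d':ℤ) :=
    Finset.Icc_subset_Icc (by omega) (by omega)
  rw [← Finset.sum_subset hsub (fun j _ hj => by simp [hj])]
  exact Finset.sum_congr rfl (fun j hj => by simp [hj])

lemma mem_laurentSet_rep {g : C(Circle1, ℂ)} (hg : g ∈ laurentSet) :
    ∃ (d : ℕ) (a : ℤ → ℂ), ∀ z : Circle1,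
      g z = ∑ j ∈ Finset.Icc (-(d:ℤ)) (d:ℤ), (z:ℂ) ^ j * a j := by
  induction hg using Submodule.span_induction with
  | mem x hx =>
      obtain ⟨j, rfl⟩ := hx
      refine ⟨j.natAbs, fun k => if k = j then 1 else 0, fun z => ?_⟩
      rw [Finset.sum_eq_single j]
      · simp
      · intro k _ hk; simp [hk]
      · intro hj
        exfalso; apply hj
        simp only [Finset.mem_Icc]
        omega
  | zero => exact ⟨0, fun _ => 0, fun z => by simp⟩
  | add x y _ _ hx hy =>
      obtain ⟨d1, a1, h1⟩ := hx
      obtain ⟨d2, a2, h2⟩ := hy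
      obtain ⟨b1, hb1⟩ := scalar_rep_mono (le_max_left d1 d2) ⟨a1, h1⟩
      obtain ⟨b2, hb2⟩ := scalar_rep_mono (le_max_right d1 d2) ⟨a2, h2⟩
      refine ⟨max d1 d2, b1 + b2, fun z => ?_⟩
      simp only [ContinuousMap.add_apply, hb1 z, hb2 z, Pi.add_apply, mul_add,
        Finset.sum_add_distrib]
  | smul c x _ hx =>
      obtain ⟨d, a, ha⟩ := hx
      refine ⟨d, fun j => c * a j, fun z => ?_⟩
      have : (c • x) z = c * x z := rfl
      rw [this, ha z, Finset.mul_sum]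
      exact Finset.sum_congr rfl (fun j _ => by ring)

/-- scalar approximation -/
lemma scalar_approx (γ : C(Circle1, ℂ)) {ε : ℝ} (hε : 0 < ε) :
    ∃ (d : ℕ) (a : ℤ → ℂ) (q : C(Circle1, ℂ)),
      (∀ z : Circle1, q z = ∑ j ∈ Finset.Icc (-(d:ℤ)) (d:ℤ), (z:ℂ) ^ j * a j) ∧ ‖q - γ‖ < ε := by
  have hγ : γ ∈ laurentAlg.topologicalClosure := by rw [laurentAlg_dense]; trivial
  have hγ' : γ ∈ closure (laurentAlg : Set C(Circle1, ℂ)) := hγ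
  obtain ⟨q, hq, hdist⟩ := Metric.mem_closure_iff.mp hγ' ε hε
  obtain ⟨d, a, ha⟩ := mem_laurentSet_rep hq
  exact ⟨d, a, q, ha, by rwa [← dist_eq_norm, dist_comm]⟩

variable {n : ℕ}

lemma laurent_mono {d d' : ℕ} (hdd : d ≤ d') {γ : C(Circle1, Fin n → ℂ)}
    (h : IsLaurentLoopOfDeg d γ) : IsLaurentLoopOfDeg d' γ := by
  obtain ⟨a, ha⟩ := h
  refine ⟨fun j => if j ∈ Finset.Icc (-(d:ℤ)) (d:ℤ) then a j else 0, fun z => ?_⟩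
  rw [ha z]
  have hsub : Finset.Icc (-(d:ℤ)) (d:ℤ) ⊆ Finset.Icc (-(d':ℤ)) (d':ℤ) :=
    Finset.Icc_subset_Icc (by omega) (by omega)
  rw [← Finset.sum_subset hsub (fun j _ hj => by simp [hj])]
  exact Finset.sum_congr rfl (fun j hj => by simp [hj])

lemma laurent_zero (d : ℕ) : IsLaurentLoopOfDeg d (0 : C(Circle1, Fin n → ℂ)) :=
  ⟨fun _ => 0, fun z => by simp⟩

lemma laurent_add {d : ℕ} {γ δ : C(Circle1, Fin n → ℂ)}
    (hγ : IsLaurentLoopOfDeg d γ) (hδ : IsLaurentLoopOfDeg d δ) :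
    IsLaurentLoopOfDeg d (γ + δ) := by
  obtain ⟨a, ha⟩ := hγ
  obtain ⟨b, hb⟩ := hδ
  refine ⟨a + b, fun z => ?_⟩
  have : (γ + δ) z = γ z + δ z := rfl
  rw [this, ha z, hb z, ← Finset.sum_add_distrib]
  exact Finset.sum_congr rfl (fun j _ => by simp [smul_add])

lemma laurent_smul {R : Type*} [Semiring R] [Module R ℂ] [SMulCommClass R ℂ ℂ]
    (r : R) {d : ℕ} {γ : C(Circle1, Fin n → ℂ)} (hγ : IsLaurentLoopOfDeg d γ) :
    IsLaurentLoopOfDeg d (r • γ) := by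
  obtain ⟨a, ha⟩ := hγ
  refine ⟨fun j => r • a j, fun z => ?_⟩
  have : (r • γ) z = r • γ z := rfl
  rw [this, ha z, Finset.smul_sum]
  exact Finset.sum_congr rfl (fun j _ => (smul_comm r ((z:ℂ)^j) (a j)))

lemma laurent_sum {ι : Type*} (s : Finset ι) (F : ι → C(Circle1, Fin n → ℂ)) {d : ℕ}
    (h : ∀ i ∈ s, IsLaurentLoopOfDeg d (F i)) :
    IsLaurentLoopOfDeg d (∑ i ∈ s, F i) :=
  Finset.sum_induction F _ (fun _ _ => laurent_add) (laurent_zero d) h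

lemma laurent_sub {d : ℕ} {γ δ : C(Circle1, Fin n → ℂ)}
    (hγ : IsLaurentLoopOfDeg d γ) (hδ : IsLaurentLoopOfDeg d δ) :
    IsLaurentLoopOfDeg d (γ - δ) := by
  have : γ - δ = γ + (-1 : ℂ) • δ := by ext z; simp [sub_eq_add_neg]
  rw [this]
  exact laurent_add hγ (laurent_smul (-1 : ℂ) hδ)

lemma vector_approx (γ : C(Circle1, Fin n → ℂ)) {ε : ℝ} (hε : 0 < ε) :
    ∃ (d : ℕ) (q : C(Circle1, Fin n → ℂ)), IsLaurentLoopOfDeg d q ∧ ‖q - γ‖ ≤ ε := by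
  have hε2 : 0 < ε / 2 := by positivity
  have key : ∀ i : Fin n, ∃ (d : ℕ) (a : ℤ → ℂ) (q : C(Circle1, ℂ)),
      (∀ z : Circle1, q z = ∑ j ∈ Finset.Icc (-(d:ℤ)) (d:ℤ), (z:ℂ) ^ j * a j) ∧
      ‖q - ContinuousMap.comp ⟨fun v => v i, continuous_apply i⟩ γ‖ < ε / 2 := fun i =>
    scalar_approx _ hε2
  choose dd aa qq hrep hnorm using key
  set d := Finset.univ.sup dd with hd
  have key2 : ∀ i : Fin n, ∃ b : ℤ → ℂ, ∀ z : Circle1,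
      qq i z = ∑ j ∈ Finset.Icc (-(d:ℤ)) (d:ℤ), (z:ℂ) ^ j * b j := fun i =>
    scalar_rep_mono (Finset.le_sup (Finset.mem_univ i)) ⟨aa i, hrep i⟩
  choose bb hbb using key2
  refine ⟨d, ⟨fun z i => qq i z, continuous_pi (fun i => (qq i).continuous)⟩,
    ⟨fun j i => bb i j, fun z => ?_⟩, ?_⟩
  · funext i
    rw [Finset.sum_apply]
    simp only [ContinuousMap.coe_mk]
    rw [hbb i z]
    exact Finset.sum_congr rfl (fun j _ => by simp [Pi.smul_apply, smul_eq_mul])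
  · rw [ContinuousMap.norm_le _ (le_of_lt hε)]
    intro z
    have hz : ∀ i, ‖qq i z - γ z i‖ ≤ ε / 2 := by
      intro i
      have := ContinuousMap.norm_coe_le_norm
        (qq i - ContinuousMap.comp ⟨fun v => v i, continuous_apply i⟩ γ) z
      have h2 := (hnorm i).le
      calc ‖qq i z - γ z i‖ ≤ ‖qq i - ContinuousMap.comp ⟨fun v => v i, continuous_apply i⟩ γ‖ := this
        _ ≤ ε / 2 := h2
    calc ‖(⟨fun z i => qq i z, _⟩ - γ : C(Circle1, Fin n → ℂ)) z‖
        ≤ ε / 2 := by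
          rw [show (⟨fun z i => qq i z, _⟩ - γ : C(Circle1, Fin n → ℂ)) z
              = fun i => qq i z - γ z i from rfl]
          exact pi_norm_le_iff_of_nonneg hε2.le |>.mpr hz
      _ ≤ ε := by linarith

noncomputable def vecMonL (n : ℕ) (j : ℤ) : (Fin n → ℂ) →ₗ[ℂ] C(Circle1, Fin n → ℂ) where
  toFun v := ⟨fun z => (z:ℂ)^j • v, ((mono j).continuous).smul continuous_const⟩
  map_add' u v := ContinuousMap.ext fun z => smul_add ((z:ℂ)^j) u v
  map_smul' c v := ContinuousMap.ext fun z => smul_comm ((z:ℂ)^j) c v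

noncomputable def Phi (n D : ℕ) :
    ((Finset.Icc (-(D:ℤ)) (D:ℤ)) → Fin n → ℂ) →ₗ[ℂ] C(Circle1, Fin n → ℂ) :=
  ∑ j : (Finset.Icc (-(D:ℤ)) (D:ℤ)), (vecMonL n j.1).comp (LinearMap.proj j)

lemma Phi_apply (n D : ℕ) (a : (Finset.Icc (-(D:ℤ)) (D:ℤ)) → Fin n → ℂ) (z : Circle1) :
    Phi n D a z = ∑ j : (Finset.Icc (-(D:ℤ)) (D:ℤ)), (z:ℂ) ^ (j.1) • a j := by
  simp only [Phi, LinearMap.sum_apply, LinearMap.comp_apply, LinearMap.proj_apply,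
    ContinuousMap.coe_sum, Finset.sum_apply]
  rfl

lemma laurent_Phi (n D : ℕ) (a : (Finset.Icc (-(D:ℤ)) (D:ℤ)) → Fin n → ℂ) :
    IsLaurentLoopOfDeg D (Phi n D a) := by
  classical
  refine ⟨fun j => if h : j ∈ Finset.Icc (-(D:ℤ)) (D:ℤ) then a ⟨j, h⟩ else 0, fun z => ?_⟩
  rw [Phi_apply]
  rw [Finset.univ_eq_attach, ← Finset.sum_attach (Finset.Icc (-(D:ℤ)) (D:ℤ))
    (fun j => (z:ℂ) ^ j • if h : j ∈ Finset.Icc (-(D:ℤ)) (D:ℤ) then a ⟨j, h⟩ else 0)]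
  exact Finset.sum_congr rfl (fun j _ => by rw [dif_pos j.2])

lemma rep_mem_range (n D : ℕ) (γ : C(Circle1, Fin n → ℂ)) (b : ℤ → Fin n → ℂ)
    (hb : ∀ z : Circle1, γ z = ∑ j ∈ Finset.Icc (-(D:ℤ)) (D:ℤ), (z:ℂ) ^ j • b j) :
    γ ∈ LinearMap.range (Phi n D) := by
  refine ⟨fun j => b j.1, ?_⟩
  ext z
  rw [Phi_apply, hb z, Finset.univ_eq_attach,
    ← Finset.sum_attach (Finset.Icc (-(D:ℤ)) (D:ℤ)) (fun j => (z:ℂ) ^ j • b j)]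

end BauerAux


set_option maxHeartbeats 1000000
set_option synthInstance.maxHeartbeats 1000000
open BauerAux

/-- Bauer's approximation lemma: a continuous family (over a compact Hausdorff space `X`)
of nowhere-vanishing loops in `ℂⁿ ∖ {0}`, which consists of Laurent-polynomial loops of
degree `≤ c` over a closed subspace `Y ⊆ X`, can be deformed through nowhere-vanishing
loops, fixing the family over `Y`, to a family of Laurent-polynomial loops of degree `≤ d`
for some `d > 0`. -/
theorem deform_to_laurent_polynomial_loops
    {n : ℕ} (hn : 1 ≤ n) {X : Type*} [TopologicalSpace X] [CompactSpace X] [T2Space X]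
    (Y : Set X) (hY : IsClosed Y)
    (f : X → C(Circle1, Fin n → ℂ)) (hf : Continuous f)
    (hfne : ∀ x z, f x z ≠ 0)
    (c : ℕ) (hfY : ∀ y ∈ Y, IsLaurentLoopOfDeg c (f y)) :
    ∃ (d : ℕ) (g : X → C(Circle1, Fin n → ℂ)),
      0 < d ∧ Continuous g ∧
      (∀ x, IsLaurentLoopOfDeg d (g x)) ∧
      (∀ x z, g x z ≠ 0) ∧
      (∀ y ∈ Y, g y = f y) ∧
      (∀ t : ℝ, t ∈ Set.Icc (0 : ℝ) 1 → ∀ x z, (1 - t) • f x z + t • g x z ≠ 0) := by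
  classical
  rcases isEmpty_or_nonempty X with hX | hX
  · exact ⟨1, f, one_pos, hf, fun x => (IsEmpty.false x).elim, fun x => (IsEmpty.false x).elim,
      fun y _ => rfl, fun t _ x => (IsEmpty.false x).elim⟩
  -- the minimum modulus m
  have hev : Continuous fun p : X × Circle1 => f p.1 p.2 :=
    continuous_eval.comp (hf.prodMap continuous_id)
  have hnc : Continuous fun p : X × Circle1 => ‖f p.1 p.2‖ := hev.norm
  have hne : Nonempty Circle1 := ⟨⟨1, by simp⟩⟩
  obtain ⟨p0, -, hp0⟩ := isCompact_univ.exists_isMinOn Set.univ_nonempty hnc.continuousOn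
  set m : ℝ := ‖f p0.1 p0.2‖ with hm
  have hm0 : 0 < m := norm_pos_iff.mpr (hfne _ _)
  have hmle : ∀ x z, m ≤ ‖f x z‖ := fun x z => (isMinOn_iff.mp hp0) ((x, z) : X × Circle1) (Set.mem_univ _)
  set ε : ℝ := m / 4 with hε
  have hε0 : 0 < ε := by positivity
  -- finite cover by sets where f varies little
  set U : X → Set X := fun x0 => f ⁻¹' Metric.ball (f x0) (ε / 2) with hUdef
  have hUopen : ∀ x0, IsOpen (U x0) := fun x0 => Metric.isOpen_ball.preimage hf
  obtain ⟨t, ht⟩ := isCompact_univ.elim_finite_subcover U hUopen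
    (fun x _ => Set.mem_iUnion.mpr ⟨x, by simp [hUdef, half_pos hε0]⟩)
  -- Laurent approximations at the centers
  have key : ∀ x0 : X, ∃ (d : ℕ) (q : C(Circle1, Fin n → ℂ)),
      IsLaurentLoopOfDeg d q ∧ ‖q - f x0‖ ≤ ε / 2 :=
    fun x0 => vector_approx (f x0) (half_pos hε0)
  choose dq qf hq hqn using key
  set d : ℕ := t.sup dq with hdd
  -- partition of unity
  obtain ⟨φ, hφ⟩ := PartitionOfUnity.exists_isSubordinate (ι := t) (X := X) isClosed_univ
    (fun i => U i.1) (fun i => hUopen i.1)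
    (by
      intro x hx
      have h2 := ht (Set.mem_univ x)
      rw [Set.mem_iUnion₂] at h2
      obtain ⟨i, hi, hxi⟩ := h2
      exact Set.mem_iUnion.mpr ⟨⟨i, hi⟩, hxi⟩)
  set p : X → C(Circle1, Fin n → ℂ) := fun x => ∑ i : t, φ i x • qf i.1 with hpdef
  have hpc : Continuous p :=
    continuous_finset_sum _ fun i _ => ((φ i).continuous).smul continuous_const
  have hplaurent : ∀ x, IsLaurentLoopOfDeg d (p x) := fun x =>
    laurent_sum _ _ fun i _ =>
      laurent_smul (φ i x) (laurent_mono (Finset.le_sup i.2) (hq i.1))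
  -- pointwise estimate ‖p x z - f x z‖ ≤ ε
  have hpf : ∀ (x : X) (z : Circle1), ‖p x z - f x z‖ ≤ ε := by
    intro x z
    have hsum1 : ∑ i : t, φ i x = 1 := by
      have h1 := φ.sum_eq_one (Set.mem_univ x)
      rwa [finsum_eq_sum_of_fintype] at h1
    have hpx : p x z = ∑ i : t, φ i x • qf i.1 z := by
      simp only [hpdef, ContinuousMap.coe_sum, Finset.sum_apply, ContinuousMap.coe_smul,
        Pi.smul_apply]
    have hfx : f x z = ∑ i : t, φ i x • f x z := by
      rw [← Finset.sum_smul, hsum1, one_smul]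
    have hsplit : p x z - f x z = ∑ i : t, φ i x • (qf i.1 z - f x z) := by
      rw [hpx]
      conv_lhs => rw [hfx]
      rw [← Finset.sum_sub_distrib]
      exact Finset.sum_congr rfl fun i _ => (smul_sub _ _ _).symm
    rw [hsplit]
    have hterm : ∀ i ∈ (Finset.univ : Finset t), ‖φ i x • (qf i.1 z - f x z)‖ ≤ φ i x * ε := by
      intro i _
      rw [norm_smul, Real.norm_of_nonneg (φ.nonneg i x)]
      by_cases hzero : φ i x = 0
      · simp [hzero]
      · have hxU : x ∈ U i.1 := hφ i (subset_closure (Function.mem_support.mpr hzero))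
        have hdist : dist (f x) (f i.1) < ε / 2 := by
          have := hxU
          simpa [hUdef, Metric.mem_ball] using this
        have h1 : ‖qf i.1 z - f i.1 z‖ ≤ ε / 2 := by
          have h2 := ContinuousMap.norm_coe_le_norm (qf i.1 - f i.1) z
          rw [ContinuousMap.sub_apply] at h2
          exact le_trans h2 (hqn i.1)
        have h2 : ‖f i.1 z - f x z‖ ≤ ε / 2 := by
          have h3 := ContinuousMap.norm_coe_le_norm (f i.1 - f x) z
          rw [ContinuousMap.sub_apply] at h3
          have h4 : ‖f i.1 - f x‖ < ε / 2 := by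
            rw [← dist_eq_norm, dist_comm]
            exact hdist
          linarith
        have h5 : ‖qf i.1 z - f x z‖ ≤ ε := by
          have h6 : qf i.1 z - f x z = (qf i.1 z - f i.1 z) + (f i.1 z - f x z) := by abel
          rw [h6]
          calc ‖(qf i.1 z - f i.1 z) + (f i.1 z - f x z)‖
              ≤ ‖qf i.1 z - f i.1 z‖ + ‖f i.1 z - f x z‖ := norm_add_le _ _
            _ ≤ ε / 2 + ε / 2 := add_le_add h1 h2
            _ = ε := by ring
        exact mul_le_mul_of_nonneg_left h5 (φ.nonneg i x)
    calc ‖∑ i : t, φ i x • (qf i.1 z - f x z)‖ ≤ ∑ i : t, ‖φ i x • (qf i.1 z - f x z)‖ :=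
          norm_sum_le _ _
      _ ≤ ∑ i : t, φ i x * ε := Finset.sum_le_sum hterm
      _ = ε := by rw [← Finset.sum_mul, hsum1, one_mul]
  -- the degree and coefficient space
  set D : ℕ := max (max c d) 1 with hDdef
  have hD0 : 0 < D := lt_of_lt_of_le one_pos (le_max_right _ _)
  set Φ := Phi n D with hΦdef
  set W := LinearMap.range Φ with hWdef
  haveI hfree : Module.Free ℂ W := Module.Free.of_divisionRing ℂ ↥W
  haveI hproj : Module.Projective ℂ W := Module.Projective.of_free
  obtain ⟨sec, hsec⟩ := Φ.rangeRestrict.exists_rightInverse_of_surjective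
    (LinearMap.range_eq_top.mpr Φ.surjective_rangeRestrict)
  have hΦsec : ∀ w : W, Φ (sec w) = (w : C(Circle1, Fin n → ℂ)) := by
    intro w
    have h1 := DFunLike.congr_fun hsec w
    exact congrArg Subtype.val h1
  have hmemW : ∀ y : Y, f y.1 - p y.1 ∈ W := by
    intro y
    have h1 : IsLaurentLoopOfDeg D (f y.1 - p y.1) :=
      laurent_sub
        (laurent_mono (le_trans (le_max_left c d) (le_max_left _ 1)) (hfY y.1 y.2))
        (laurent_mono (le_trans (le_max_right c d) (le_max_left _ 1)) (hplaurent y.1))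
    obtain ⟨b, hb⟩ := h1
    exact rep_mem_range n D _ b hb
  have hWc : Continuous fun y : Y => (⟨f y.1 - p y.1, hmemW y⟩ : W) :=
    Continuous.subtype_mk
      ((hf.comp continuous_subtype_val).sub (hpc.comp continuous_subtype_val)) _
  have hsecc : Continuous sec := by
    have : FiniteDimensional ℂ W := inferInstance
    exact LinearMap.continuous_of_finiteDimensional (𝕜 := ℂ) (E := W) sec
  obtain ⟨K, hK⟩ := ContinuousMap.exists_restrict_eq hY
    (⟨fun y => sec ⟨f y.1 - p y.1, hmemW y⟩, hsecc.comp hWc⟩ :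
      C(Y, (Finset.Icc (-(D:ℤ)) (D:ℤ)) → Fin n → ℂ))
  have hKy : ∀ y : Y, K y.1 = sec ⟨f y.1 - p y.1, hmemW y⟩ := fun y => DFunLike.congr_fun hK y
  -- the corrected family
  set v : X → C(Circle1, Fin n → ℂ) := fun x => Φ (K x) with hvdef
  have hvc : Continuous v := Φ.continuous_of_finiteDimensional.comp K.continuous
  set σ : X → ℝ := fun x => ε / max ε ‖v x‖ with hσdef
  have hmaxpos : ∀ x, 0 < max ε ‖v x‖ := fun x => lt_of_lt_of_le hε0 (le_max_left _ _)
  have hσc : Continuous σ :=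
    continuous_const.div (continuous_const.max hvc.norm) (fun x => (hmaxpos x).ne')
  have hσ0 : ∀ x, 0 ≤ σ x := fun x => div_nonneg hε0.le (hmaxpos x).le
  set g : X → C(Circle1, Fin n → ℂ) := fun x => p x + σ x • v x with hgdef
  have hgc : Continuous g := hpc.add (hσc.smul hvc)
  have hglaurent : ∀ x, IsLaurentLoopOfDeg D (g x) := fun x =>
    laurent_add
      (laurent_mono (le_trans (le_max_right c d) (le_max_left _ 1)) (hplaurent x))
      (laurent_smul (σ x) (laurent_Phi n D (K x)))
  have hcorr : ∀ (x : X) (z : Circle1), ‖(σ x • v x) z‖ ≤ ε := by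
    intro x z
    have h0 : (σ x • v x) z = σ x • v x z := rfl
    rw [h0, norm_smul, Real.norm_of_nonneg (hσ0 x)]
    calc σ x * ‖v x z‖ ≤ σ x * max ε ‖v x‖ :=
          mul_le_mul_of_nonneg_left
            (le_trans (ContinuousMap.norm_coe_le_norm (v x) z) (le_max_right _ _)) (hσ0 x)
      _ = ε := by
          show ε / max ε ‖v x‖ * max ε ‖v x‖ = ε
          exact div_mul_cancel₀ ε (hmaxpos x).ne'
  -- g agrees with f on Y
  have hgY : ∀ y ∈ Y, g y = f y := by
    intro y hy
    have hvy : v y = f y - p y := by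
      show Φ (K y) = f y - p y
      rw [hKy ⟨y, hy⟩]
      exact hΦsec _
    have hnv : ‖v y‖ ≤ ε := by
      rw [hvy]
      rw [ContinuousMap.norm_le _ hε0.le]
      intro z
      rw [ContinuousMap.sub_apply]
      rw [norm_sub_rev]
      exact hpf y z
    have hσy : σ y = 1 := by
      show ε / max ε ‖v y‖ = 1
      rw [max_eq_left hnv]
      exact div_self hε0.ne'
    show p y + σ y • v y = f y
    rw [hσy, one_smul, hvy]
    abel
  -- pointwise closeness of g to f
  have hclose : ∀ (x : X) (z : Circle1), ‖g x z - f x z‖ ≤ m / 2 := by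
    intro x z
    have h1 : g x z - f x z = (p x z - f x z) + (σ x • v x) z := by
      show (p x + σ x • v x) z - f x z = _
      rw [ContinuousMap.add_apply]
      abel
    have h2 : ‖(σ x • v x) z‖ ≤ ε := hcorr x z
    calc ‖g x z - f x z‖ = ‖(p x z - f x z) + (σ x • v x) z‖ := by rw [h1]
      _ ≤ ‖p x z - f x z‖ + ‖(σ x • v x) z‖ := norm_add_le _ _
      _ ≤ ε + ε := add_le_add (hpf x z) h2
      _ = m / 2 := by rw [hε]; ring
  -- the homotopy claim
  have hhom : ∀ t : ℝ, t ∈ Set.Icc (0 : ℝ) 1 → ∀ x z, (1 - t) • f x z + t • g x z ≠ 0 := by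
    intro t ht x z h0
    have hre : (1 - t) • f x z + t • g x z = f x z + t • (g x z - f x z) := by
      rw [sub_smul, one_smul, smul_sub]
      abel
    rw [hre] at h0
    have heq : f x z = -(t • (g x z - f x z)) := by
      rw [eq_neg_iff_add_eq_zero]
      exact h0
    have hnorm : ‖f x z‖ = |t| * ‖g x z - f x z‖ := by
      conv_lhs => rw [heq]
      rw [norm_neg, norm_smul, Real.norm_eq_abs]
    have habs : |t| ≤ 1 := abs_le.mpr ⟨by linarith [ht.1], ht.2⟩
    have hb : ‖f x z‖ ≤ m / 2 := by
      rw [hnorm]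
      calc |t| * ‖g x z - f x z‖ ≤ 1 * (m / 2) :=
            mul_le_mul habs (hclose x z) (norm_nonneg _) zero_le_one
        _ = m / 2 := one_mul _
    have := hmle x z
    linarith
  refine ⟨D, g, hD0, hgc, hglaurent, ?_, hgY, hhom⟩
  intro x z
  have h1 := hhom 1 (by norm_num) x z
  simpa using h1
end

section
/- Let n ≥ 2 and fix the basepoint e₁ ∈ ℂⁿ∖{0}. Let Ω(ℂⁿ∖{0}) be the space of continuous loops γ : S¹ → ℂⁿ∖{0} with γ(1) = e₁ (compact-open topology), and let Ω_pol(ℂⁿ∖{0}) be the subspace of those γ that are Laurent-polynomial loops. Then the inclusion Ω_pol(ℂⁿ∖{0}) ↪ Ω(ℂⁿ∖{0}) is a weak homotopy equivalence, i.e., it induces a bijection on path components and isomorphisms on all homotopy groups at every basepoint. -/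
/-- The basepoint `1 ∈ S¹`. -/
def Circle1.base : Circle1 := ⟨1, by simp⟩

/-- The map induced on path components by a continuous map. -/
def ContinuousMap.mapZerothHomotopy {X Y : Type*} [TopologicalSpace X] [TopologicalSpace Y]
    (f : C(X, Y)) : ZerothHomotopy X → ZerothHomotopy Y :=
  Quotient.map f (fun _ _ h => ⟨h.somePath.map f.continuous⟩)

/-- The map induced on homotopy groups (based at `x`, indexed by `N`) by a continuous map. -/
def ContinuousMap.mapHomotopyGroup (N : Type*) {X Y : Type*} [TopologicalSpace X]
    [TopologicalSpace Y] (f : C(X, Y)) (x : X) :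
    HomotopyGroup N X x → HomotopyGroup N Y (f x) :=
  Quotient.map (fun p => ⟨f.comp p.1, fun y hy => by simp [p.2 y hy]⟩)
    (fun p q h => Nonempty.map (fun H => H.compContinuousMap f) h)

/-- A continuous map is a weak homotopy equivalence if it induces a bijection on path
components and bijections on all homotopy groups at every basepoint. -/
def ContinuousMap.IsWeakHomotopyEquiv {X Y : Type*} [TopologicalSpace X] [TopologicalSpace Y]
    (f : C(X, Y)) : Prop :=
  Function.Bijective f.mapZerothHomotopy ∧
    ∀ (x : X) (n : ℕ), Function.Bijective (f.mapHomotopyGroup (Fin n) x)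

/-- `ℂⁿ ∖ {0}`, with the subspace topology. -/
abbrev NonzeroVec (n : ℕ) : Type := {v : Fin n → ℂ // v ≠ 0}

/-- The basepoint `e₁ ∈ ℂⁿ ∖ {0}`. -/
def NonzeroVec.e1 (n : ℕ) (h : 0 < n) : NonzeroVec n :=
  ⟨Pi.single ⟨0, h⟩ 1, by
    intro hzero
    have h1 := congrFun hzero ⟨0, h⟩
    simp at h1⟩

/-- A loop in `ℂⁿ ∖ {0}` is a Laurent-polynomial loop if there are `d` and vectors
`a_j ∈ ℂⁿ` with `γ(z) = ∑_{j=-d}^{d} a_j zʲ` on the circle. -/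
def IsLaurentLoopNZ {n : ℕ} (γ : C(Circle1, NonzeroVec n)) : Prop :=
  ∃ (d : ℕ) (a : ℤ → (Fin n → ℂ)), ∀ z : Circle1,
    (γ z : Fin n → ℂ) = ∑ j ∈ Finset.Icc (-(d : ℤ)) (d : ℤ), (z : ℂ) ^ j • a j



lemma Circle1.ne_zero' : True := trivial
instance : CompactSpace Circle1 := by
  have h : IsCompact {z : ℂ | ‖z‖ = 1} := by
    have h2 : {z : ℂ | ‖z‖ = 1} = Metric.sphere (0:ℂ) 1 := by
      ext z; simp [Complex.dist_eq]
    rw [h2]; exact isCompact_sphere 0 1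
  exact isCompact_iff_compactSpace.mp h
instance : Nonempty Circle1 := ⟨Circle1.base⟩

open Finset

def LSc (f : Circle1 → ℂ) : Prop :=
  ∃ (d : ℕ) (a : ℤ → ℂ), ∀ z : Circle1, f z = ∑ j ∈ Icc (-(d:ℤ)) (d:ℤ), (z:ℂ) ^ j * a j

lemma Circle1.ne_zero (z : Circle1) : (z : ℂ) ≠ 0 := by
  intro h; have := z.2; rw [h] at this; simp at this

lemma sum_ite_subset' {s t : Finset ℤ} (h : s ⊆ t) {M : Type*} [AddCommMonoid M] (f : ℤ → M) :
    ∑ j ∈ t, (if j ∈ s then f j else 0) = ∑ j ∈ s, f j := by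
  rw [Finset.sum_ite_mem, Finset.inter_eq_right.mpr h]

lemma LSc.degree_le {f : Circle1 → ℂ} {d : ℕ} (a : ℤ → ℂ)
    (hf : ∀ z : Circle1, f z = ∑ j ∈ Icc (-(d:ℤ)) (d:ℤ), (z:ℂ) ^ j * a j) (D : ℕ) (hD : d ≤ D) :
    ∀ z : Circle1, f z = ∑ j ∈ Icc (-(D:ℤ)) (D:ℤ),
      (z:ℂ) ^ j * (if j ∈ Icc (-(d:ℤ)) (d:ℤ) then a j else 0) := by
  intro z
  rw [hf z]
  rw [← sum_ite_subset' (Finset.Icc_subset_Icc (by omega : -(D:ℤ) ≤ -(d:ℤ)) (by exact_mod_cast hD : (d:ℤ) ≤ (D:ℤ)))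
    (fun j => (z:ℂ) ^ j * a j)]
  apply Finset.sum_congr rfl
  intro j _
  split <;> simp

lemma LSc.const (c : ℂ) : LSc (fun _ => c) := by
  refine ⟨0, fun _ => c, fun z => ?_⟩
  norm_num

lemma LSc.monomial (m : ℤ) (c : ℂ) : LSc (fun z : Circle1 => (z:ℂ) ^ m * c) := by
  refine ⟨m.natAbs, fun j => if j = m then c else 0, fun z => ?_⟩
  rw [Finset.sum_congr rfl (fun j _ => by rw [mul_ite, mul_zero]),
    Finset.sum_ite_eq' _ m (fun j => (z:ℂ)^j * c)]
  rw [if_pos (Finset.mem_Icc.mpr (by omega))]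

lemma LSc.add {f g : Circle1 → ℂ} (hf : LSc f) (hg : LSc g) : LSc (fun z => f z + g z) := by
  obtain ⟨d₁, a, ha⟩ := hf
  obtain ⟨d₂, b, hb⟩ := hg
  have ha' := LSc.degree_le a ha (max d₁ d₂) (le_max_left _ _)
  have hb' := LSc.degree_le b hb (max d₁ d₂) (le_max_right _ _)
  refine ⟨max d₁ d₂, fun j => (if j ∈ Icc (-(d₁:ℤ)) (d₁:ℤ) then a j else 0)
    + (if j ∈ Icc (-(d₂:ℤ)) (d₂:ℤ) then b j else 0), fun z => ?_⟩
  show f z + g z = _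
  rw [ha' z, hb' z, ← Finset.sum_add_distrib]
  exact Finset.sum_congr rfl (fun j _ => by ring)

lemma LSc.smul {f : Circle1 → ℂ} (hf : LSc f) (c : ℂ) : LSc (fun z => c * f z) := by
  obtain ⟨d, a, ha⟩ := hf
  refine ⟨d, fun j => c * a j, fun z => ?_⟩
  show c * f z = _
  rw [ha z, Finset.mul_sum]
  exact Finset.sum_congr rfl (fun j _ => by ring)

lemma Circle1.conj_eq_inv (z : Circle1) : (starRingEnd ℂ) (z:ℂ) = (z:ℂ)⁻¹ := by
  have h1 : (z:ℂ) * (starRingEnd ℂ) (z:ℂ) = 1 := by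
    rw [Complex.mul_conj]
    norm_cast
    rw [← Complex.sq_norm, z.2]
    norm_num
  exact eq_inv_of_mul_eq_one_right h1

lemma LSc.star {f : Circle1 → ℂ} (hf : LSc f) :
    LSc (fun z => (starRingEnd ℂ) (f z)) := by
  obtain ⟨d, a, ha⟩ := hf
  refine ⟨d, fun j => (starRingEnd ℂ) (a (-j)), fun z => ?_⟩
  show (starRingEnd ℂ) (f z) = _
  rw [ha z, map_sum]
  refine Finset.sum_equiv (Equiv.neg ℤ) (fun i => ?_) (fun i hi => ?_)
  · simp [Finset.mem_Icc]; omega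
  · rw [map_mul, map_zpow₀, Circle1.conj_eq_inv, inv_zpow, ← zpow_neg]
    simp

lemma LSc.mul {f g : Circle1 → ℂ} (hf : LSc f) (hg : LSc g) : LSc (fun z => f z * g z) := by
  obtain ⟨d₁, a, ha⟩ := hf
  obtain ⟨d₂, b, hb⟩ := hg
  set D : ℕ := d₁ + d₂ with hDdef
  set bt : ℤ → ℂ := fun k => if k ∈ Icc (-(d₂:ℤ)) (d₂:ℤ) then b k else 0 with hbt
  refine ⟨D, fun m => ∑ j ∈ Icc (-(d₁:ℤ)) (d₁:ℤ), a j * bt (m - j), fun z => ?_⟩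
  show f z * g z = _
  rw [ha z, hb z, Finset.sum_mul]
  have key : ∀ j ∈ Icc (-(d₁:ℤ)) (d₁:ℤ),
      ((z:ℂ)^j * a j) * (∑ k ∈ Icc (-(d₂:ℤ)) (d₂:ℤ), (z:ℂ)^k * b k)
      = ∑ m ∈ Icc (-(D:ℤ)) (D:ℤ), (z:ℂ)^m * (a j * bt (m - j)) := by
    intro j hj
    rw [Finset.mem_Icc] at hj
    rw [Finset.mul_sum]
    have h1 : ∀ k ∈ Icc (-(d₂:ℤ)) (d₂:ℤ),
        ((z:ℂ)^j * a j) * ((z:ℂ)^k * b k) = (z:ℂ)^(j+k) * (a j * b k) := by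
      intro k _
      rw [zpow_add₀ (Circle1.ne_zero z)]
      ring
    rw [Finset.sum_congr rfl h1]
    have h2 : ∑ k ∈ Icc (-(d₂:ℤ)) (d₂:ℤ), (z:ℂ)^(j+k) * (a j * b k)
        = ∑ m ∈ Icc (j-(d₂:ℤ)) (j+(d₂:ℤ)), (z:ℂ)^m * (a j * b (m - j)) := by
      refine Finset.sum_equiv (Equiv.addLeft j) (fun i => ?_) (fun i hi => ?_)
      · simp [Finset.mem_Icc]; omega
      · simp [Equiv.addLeft]
    rw [h2]
    rw [← sum_ite_subset' (Finset.Icc_subset_Icc (by omega : -(D:ℤ) ≤ j - d₂)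
      (by omega : j + (d₂:ℤ) ≤ D)) (fun m => (z:ℂ)^m * (a j * b (m - j)))]
    refine Finset.sum_congr rfl (fun m _ => ?_)
    by_cases hm : m ∈ Icc (j-(d₂:ℤ)) (j+(d₂:ℤ))
    · rw [if_pos hm]
      have h3 : m - j ∈ Icc (-(d₂:ℤ)) (d₂:ℤ) := by
        rw [Finset.mem_Icc] at hm ⊢; omega
      show _ = _ * (_ * (if m - j ∈ Icc (-(d₂:ℤ)) (d₂:ℤ) then b (m-j) else 0))
      rw [if_pos h3]
    · rw [if_neg hm]
      have h3 : m - j ∉ Icc (-(d₂:ℤ)) (d₂:ℤ) := by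
        rw [Finset.mem_Icc] at hm ⊢; omega
      show _ = _ * (_ * (if m - j ∈ Icc (-(d₂:ℤ)) (d₂:ℤ) then b (m-j) else 0))
      rw [if_neg h3, mul_zero, mul_zero]
  rw [Finset.sum_congr rfl key, Finset.sum_comm]
  refine Finset.sum_congr rfl (fun m _ => ?_)
  rw [Finset.mul_sum]

section
-- vector version
variable {n : ℕ}

def LF (γ : Circle1 → (Fin n → ℂ)) : Prop :=
  ∃ (d : ℕ) (a : ℤ → (Fin n → ℂ)), ∀ z : Circle1,
    γ z = ∑ j ∈ Icc (-(d:ℤ)) (d:ℤ), (z:ℂ) ^ j • a j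

lemma LF.degree_le {γ : Circle1 → (Fin n → ℂ)} {d : ℕ} (a : ℤ → (Fin n → ℂ))
    (hf : ∀ z : Circle1, γ z = ∑ j ∈ Icc (-(d:ℤ)) (d:ℤ), (z:ℂ) ^ j • a j) (D : ℕ) (hD : d ≤ D) :
    ∀ z : Circle1, γ z = ∑ j ∈ Icc (-(D:ℤ)) (D:ℤ),
      (z:ℂ) ^ j • (if j ∈ Icc (-(d:ℤ)) (d:ℤ) then a j else 0) := by
  intro z
  rw [hf z, ← sum_ite_subset' (Finset.Icc_subset_Icc (by omega : -(D:ℤ) ≤ -(d:ℤ))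
    (by exact_mod_cast hD : (d:ℤ) ≤ (D:ℤ))) (fun j => (z:ℂ) ^ j • a j)]
  apply Finset.sum_congr rfl
  intro j _
  split <;> simp

lemma LF.ofCoords {γ : Circle1 → (Fin n → ℂ)} (h : ∀ i, LSc (fun z => γ z i)) : LF γ := by
  choose d a ha using h
  set D : ℕ := Finset.univ.sup d with hd
  refine ⟨D, fun j i => if j ∈ Icc (-(d i:ℤ)) (d i:ℤ) then a i j else 0, fun z => ?_⟩
  funext i
  have h2 : γ z i = ∑ j ∈ Icc (-(D:ℤ)) (D:ℤ),
      (z:ℂ) ^ j * (if j ∈ Icc (-(d i:ℤ)) (d i:ℤ) then a i j else 0) :=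
    LSc.degree_le (f := fun z => γ z i) (a i) (ha i) D (Finset.le_sup (Finset.mem_univ i)) z
  rw [h2]
  rw [Finset.sum_apply]
  apply Finset.sum_congr rfl
  intro j _
  simp [smul_eq_mul]

lemma LF.add {γ δ : Circle1 → (Fin n → ℂ)} (hγ : LF γ) (hδ : LF δ) :
    LF (fun z => γ z + δ z) := by
  obtain ⟨d₁, a, ha⟩ := hγ
  obtain ⟨d₂, b, hb⟩ := hδ
  have ha' := LF.degree_le a ha (max d₁ d₂) (le_max_left _ _)
  have hb' := LF.degree_le b hb (max d₁ d₂) (le_max_right _ _)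
  refine ⟨max d₁ d₂, fun j => (if j ∈ Icc (-(d₁:ℤ)) (d₁:ℤ) then a j else 0)
    + (if j ∈ Icc (-(d₂:ℤ)) (d₂:ℤ) then b j else 0), fun z => ?_⟩
  show γ z + δ z = _
  rw [ha' z, hb' z, ← Finset.sum_add_distrib]
  exact Finset.sum_congr rfl (fun j _ => by rw [smul_add])

lemma LF.rsmul {γ : Circle1 → (Fin n → ℂ)} (hγ : LF γ) (c : ℝ) :
    LF (fun z => c • γ z) := by
  obtain ⟨d, a, ha⟩ := hγ
  refine ⟨d, fun j => c • a j, fun z => ?_⟩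
  show c • γ z = _
  rw [ha z, Finset.smul_sum]
  exact Finset.sum_congr rfl (fun j _ => (smul_comm _ _ _))

lemma LF.const (v : Fin n → ℂ) : LF (fun _ => v) := by
  refine ⟨0, fun _ => v, fun z => ?_⟩
  norm_num

lemma LF.neg {γ : Circle1 → (Fin n → ℂ)} (hγ : LF γ) : LF (fun z => -γ z) := by
  have := hγ.rsmul (-1)
  simpa using this

lemma LF.sub {γ δ : Circle1 → (Fin n → ℂ)} (hγ : LF γ) (hδ : LF δ) :
    LF (fun z => γ z - δ z) := by
  have := hγ.add hδ.neg
  simpa [sub_eq_add_neg] using this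

end

-- the star subalgebra
section
variable {n : ℕ} (K : Type) [TopologicalSpace K]

noncomputable def lalg : StarSubalgebra ℂ C(K × Circle1, ℂ) where
  carrier := {f | ∀ w : K, LSc (fun z => f (w, z))}
  mul_mem' := fun {f g} hf hg w => by
    have := (hf w).mul (hg w)
    convert this using 2
    rfl
  add_mem' := fun {f g} hf hg w => by
    have := (hf w).add (hg w)
    convert this using 2
    rfl
  algebraMap_mem' := fun c w => by
    have h : (fun z : Circle1 => (algebraMap ℂ C(K × Circle1, ℂ) c) (w, z)) = fun _ => c := by
      funext z; simp
    rw [h]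
    exact LSc.const c
  star_mem' := fun {f} hf w => by
    have h : (fun z : Circle1 => (star f) (w, z)) = fun z => (starRingEnd ℂ) (f (w, z)) := by
      funext z
      simp [Complex.star_def]
    rw [h]
    exact (hf w).star

end

section
variable {n : ℕ} (K : Type) [MetricSpace K] [CompactSpace K]

lemma lalg_sep : (lalg K).SeparatesPoints := by
  rintro ⟨w, z⟩ ⟨w', z'⟩ hne
  by_cases hz : z = z'
  · have hw : w ≠ w' := fun h => hne (by rw [h, hz])
    let cm : C(K × Circle1, ℂ) :=
      ⟨fun p => ((dist p.1 w : ℝ) : ℂ),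
        Complex.continuous_ofReal.comp (continuous_fst.dist continuous_const)⟩
    have hmem : cm ∈ lalg K := by
      intro w₀
      exact LSc.const ((dist w₀ w : ℝ) : ℂ)
    refine ⟨⇑cm, ⟨cm, hmem, rfl⟩, ?_⟩
    show ((dist w w : ℝ) : ℂ) ≠ ((dist w' w : ℝ) : ℂ)
    intro h
    rw [Complex.ofReal_inj] at h
    have h3 : dist w' w = 0 := by rw [← h]; simp
    have h4 : w' = w := by rwa [dist_eq_zero] at h3
    exact hw h4.symm
  · let cm : C(K × Circle1, ℂ) := ⟨fun p => (p.2 : ℂ), continuous_subtype_val.comp continuous_snd⟩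
    have hmem : cm ∈ lalg K := by
      intro w₀
      have := LSc.monomial 1 1
      exact (by simpa using this : LSc fun z : Circle1 => (z:ℂ))
    refine ⟨⇑cm, ⟨cm, hmem, rfl⟩, ?_⟩
    show (z : ℂ) ≠ (z' : ℂ)
    exact fun h => hz (Subtype.ext h)

lemma exists_LF_approx (F : C(K × Circle1, Fin n → ℂ)) {ε : ℝ} (hε : 0 < ε) :
    ∃ A : C(K × Circle1, Fin n → ℂ),
      (∀ w, LF (fun z => A (w, z))) ∧ ∀ p, ‖A p - F p‖ < ε := by
  have hdense := ContinuousMap.starSubalgebra_topologicalClosure_eq_top_of_separatesPoints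
    (lalg K) (lalg_sep K)
  set Fc : Fin n → C(K × Circle1, ℂ) :=
    fun i => ⟨fun p => F p i, ((continuous_apply i).comp F.continuous)⟩ with hFc
  have hmem : ∀ i : Fin n, ∃ g ∈ (lalg K : Set C(K × Circle1, ℂ)), dist (Fc i) g < ε := by
    intro i
    have hcl : Fc i ∈ closure (lalg K : Set C(K × Circle1, ℂ)) := by
      have h2 : ((lalg K).topologicalClosure : Set C(K × Circle1, ℂ)) =
          closure (lalg K : Set C(K × Circle1, ℂ)) := rfl
      rw [← h2, hdense]
      trivial
    exact Metric.mem_closure_iff.mp hcl ε hε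
  choose g hg hdist using hmem
  refine ⟨⟨fun p i => g i p, by fun_prop⟩, ?_, ?_⟩
  · intro w
    apply LF.ofCoords
    intro i
    exact hg i w
  · intro p
    rw [pi_norm_lt_iff hε]
    intro i
    have h1 : dist ((g i) p) (Fc i p) ≤ dist (g i) (Fc i) :=
      ContinuousMap.dist_apply_le_dist p
    have h2 := hdist i
    rw [dist_comm] at h2
    have h3 : dist (g i p) (F p i) < ε := lt_of_le_of_lt h1 h2
    show ‖g i p - F p i‖ < ε
    rw [← dist_eq_norm]
    exact h3
end

section
variable {n : ℕ}
variable {K : Type} [MetricSpace K] [CompactSpace K]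

lemma master (C : Set K) (H E : C(K × Circle1, Fin n → ℂ))
    (hH0 : ∀ p, H p ≠ 0)
    (hEC : ∀ w ∈ C, ∀ z, E (w, z) = H (w, z))
    (hE1 : ∀ w, E (w, Circle1.base) = H (w, Circle1.base))
    (hELF : ∀ w, LF (fun z => E (w, z))) :
    ∃ G : C(K × Circle1, Fin n → ℂ),
      (∀ w ∈ C, ∀ z, G (w, z) = E (w, z)) ∧
      (∀ w, G (w, Circle1.base) = H (w, Circle1.base)) ∧
      (∀ w, LF (fun z => G (w, z))) ∧
      (∀ p, ∀ t : ℝ, t ∈ Set.Icc (0:ℝ) 1 → (1 - t) • H p + t • G p ≠ 0) := by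
  rcases isEmpty_or_nonempty K with hK | hK
  · exact ⟨H, fun w => (hK.false w).elim, fun w => (hK.false w).elim,
      fun w => (hK.false w).elim, fun p => (hK.false p.1).elim⟩
  -- minimum of ‖H‖
  obtain ⟨p₀, -, hp₀⟩ := IsCompact.exists_isMinOn
    (isCompact_univ : IsCompact (Set.univ : Set (K × Circle1)))
    Set.univ_nonempty
    (Continuous.continuousOn ((by fun_prop : Continuous fun p : K × Circle1 => ‖H p‖)))
  rw [isMinOn_iff] at hp₀
  simp only [Set.mem_univ, forall_true_left, true_implies] at hp₀
  set ρ : ℝ := ‖H p₀‖ with hρdef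
  have hρpos : 0 < ρ := norm_pos_iff.mpr (hH0 p₀)
  have hρle : ∀ p, ρ ≤ ‖H p‖ := fun p => hp₀ p
  set ε : ℝ := ρ / 8 with hεdef
  have hεpos : 0 < ε := by positivity
  obtain ⟨A, hALF, hA⟩ := exists_LF_approx K H hεpos
  -- basepoint correction
  have cA : Continuous fun p : K × Circle1 => A (p.1, Circle1.base) :=
    A.continuous.comp (continuous_fst.prodMk continuous_const)
  have cH : Continuous fun p : K × Circle1 => H (p.1, Circle1.base) :=
    H.continuous.comp (continuous_fst.prodMk continuous_const)
  set A' : C(K × Circle1, Fin n → ℂ) :=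
    ⟨fun p => A p - A (p.1, Circle1.base) + H (p.1, Circle1.base),
      (A.continuous.sub cA).add cH⟩ with hA'def
  have hA'LF : ∀ w, LF (fun z => A' (w, z)) := fun w =>
    ((hALF w).sub (LF.const (A (w, Circle1.base)))).add (LF.const (H (w, Circle1.base)))
  have hA'base : ∀ w, A' (w, Circle1.base) = H (w, Circle1.base) := by
    intro w
    show A (w, Circle1.base) - A (w, Circle1.base) + H (w, Circle1.base) = _
    rw [sub_self, zero_add]
  have hA'close : ∀ p, ‖A' p - H p‖ ≤ 2 * ε := by
    intro p
    have h1 : A' p - H p = (A p - H p) - (A (p.1, Circle1.base) - H (p.1, Circle1.base)) := by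
      show A p - A (p.1, Circle1.base) + H (p.1, Circle1.base) - H p = _
      abel
    rw [h1]
    have := (hA p).le
    have := (hA (p.1, Circle1.base)).le
    calc ‖(A p - H p) - (A (p.1, Circle1.base) - H (p.1, Circle1.base))‖
        ≤ ‖A p - H p‖ + ‖A (p.1, Circle1.base) - H (p.1, Circle1.base)‖ := norm_sub_le _ _
      _ ≤ 2 * ε := by linarith
  -- segment helper
  have seg : ∀ G : C(K × Circle1, Fin n → ℂ), (∀ p, ‖G p - H p‖ ≤ 4 * ε) →
      ∀ p, ∀ t : ℝ, t ∈ Set.Icc (0:ℝ) 1 → (1 - t) • H p + t • G p ≠ 0 := by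
    intro G hG p t ht h0
    have h1 : (1 - t) • H p + t • G p = H p + t • (G p - H p) := by
      rw [sub_smul, one_smul, smul_sub]
      abel
    rw [h1] at h0
    have h2 : H p = -(t • (G p - H p)) := eq_neg_of_add_eq_zero_left h0
    have h3 : ‖H p‖ ≤ 4 * ε := by
      rw [h2, norm_neg, norm_smul, Real.norm_eq_abs, abs_of_nonneg ht.1]
      calc t * ‖G p - H p‖ ≤ 1 * (4 * ε) :=
        mul_le_mul ht.2 (hG p) (norm_nonneg _) zero_le_one
      _ = 4 * ε := one_mul _
    have h4 := hρle p
    rw [hεdef] at h3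
    linarith
  rcases C.eq_empty_or_nonempty with hCe | hCne
  · refine ⟨A', ?_, hA'base, hA'LF, seg A' (fun p => (hA'close p).trans (by linarith))⟩
    intro w hw
    rw [hCe] at hw
    exact hw.elim
  -- C nonempty : blending
  have uE := Metric.uniformContinuous_iff.mp
    (CompactSpace.uniformContinuous_of_continuous E.continuous) ε hεpos
  have uH := Metric.uniformContinuous_iff.mp
    (CompactSpace.uniformContinuous_of_continuous H.continuous) ε hεpos
  obtain ⟨δ₁, hδ₁pos, hδ₁⟩ := uE
  obtain ⟨δ₂, hδ₂pos, hδ₂⟩ := uH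
  set δ : ℝ := min δ₁ δ₂ with hδdef
  have hδpos : 0 < δ := lt_min hδ₁pos hδ₂pos
  set u : K → ℝ := fun w => max 0 (1 - Metric.infDist w C / δ) with hudef
  have hucont : Continuous u :=
    continuous_const.max (continuous_const.sub ((Metric.continuous_infDist_pt C).div_const δ))
  have hu0 : ∀ w, 0 ≤ u w := fun w => le_max_left _ _
  have hu1 : ∀ w, u w ≤ 1 := by
    intro w
    apply max_le
    · exact zero_le_one
    · have h5 : 0 ≤ Metric.infDist w C / δ := div_nonneg Metric.infDist_nonneg hδpos.le
      linarith
  have huC : ∀ w ∈ C, u w = 1 := by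
    intro w hw
    rw [hudef]
    simp [Metric.infDist_zero_of_mem hw]
  have hupos : ∀ w, 0 < u w → ∃ w' ∈ C, dist w w' < δ := by
    intro w hw
    have h6 : Metric.infDist w C < δ := by
      by_contra h7
      push_neg at h7
      have : Metric.infDist w C / δ ≥ 1 := (one_le_div hδpos).mpr h7
      have : u w = 0 := by rw [hudef]; simp only [max_eq_left_iff]; linarith
      rw [this] at hw
      exact lt_irrefl 0 hw
    exact (Metric.infDist_lt_iff hCne).mp h6
  set G : C(K × Circle1, Fin n → ℂ) :=
    ⟨fun p => (1 - u p.1) • A' p + u p.1 • E p,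
      ((continuous_const.sub (hucont.comp continuous_fst)).smul A'.continuous).add
        ((hucont.comp continuous_fst).smul E.continuous)⟩ with hGdef
  have hGC : ∀ w ∈ C, ∀ z, G (w, z) = E (w, z) := by
    intro w hw z
    show (1 - u w) • A' (w, z) + u w • E (w, z) = E (w, z)
    rw [huC w hw]
    simp
  have hGbase : ∀ w, G (w, Circle1.base) = H (w, Circle1.base) := by
    intro w
    show (1 - u w) • A' (w, Circle1.base) + u w • E (w, Circle1.base) = _
    rw [hA'base w, hE1 w, ← add_smul]
    simp
  have hGLF : ∀ w, LF (fun z => G (w, z)) :=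
    fun w => ((hA'LF w).rsmul (1 - u w)).add ((hELF w).rsmul (u w))
  refine ⟨G, hGC, hGbase, hGLF, seg G ?_⟩
  intro p
  obtain ⟨w, z⟩ := p
  have hsplit : G (w, z) - H (w, z)
      = (1 - u w) • (A' (w, z) - H (w, z)) + u w • (E (w, z) - H (w, z)) := by
    show (1 - u w) • A' (w, z) + u w • E (w, z) - H (w, z) = _
    module
  have hEbound : u w • (E (w, z) - H (w, z)) = 0 ∨ ‖E (w, z) - H (w, z)‖ ≤ 2 * ε := by
    rcases eq_or_lt_of_le (hu0 w) with h | h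
    · left; rw [← h, zero_smul]
    · right
      obtain ⟨w', hw', hdist⟩ := hupos w h
      have hd : dist ((w, z) : K × Circle1) ((w', z) : K × Circle1) < δ := by
        rw [Prod.dist_eq]
        simp only [dist_self]
        exact max_lt_iff.mpr ⟨hdist, hδpos⟩
      have h8 : dist (E (w, z)) (E (w', z)) < ε := hδ₁ (lt_of_lt_of_le hd (min_le_left _ _))
      have h9 : dist (H (w, z)) (H (w', z)) < ε := hδ₂ (lt_of_lt_of_le hd (min_le_right _ _))
      rw [dist_comm] at h9
      have h10 : E (w', z) = H (w', z) := hEC w' hw' z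
      calc ‖E (w, z) - H (w, z)‖ = dist (E (w, z)) (H (w, z)) := (dist_eq_norm _ _).symm
        _ ≤ dist (E (w, z)) (E (w', z)) + dist (E (w', z)) (H (w, z)) := dist_triangle _ _ _
        _ ≤ dist (E (w, z)) (E (w', z)) + dist (H (w', z)) (H (w, z)) := by
            exact le_of_eq (by rw [h10])
        _ ≤ 2 * ε := by linarith
  rw [hsplit]
  have t1 : ‖(1 - u w) • (A' (w, z) - H (w, z))‖ ≤ 2 * ε := by
    rw [norm_smul, Real.norm_eq_abs, abs_of_nonneg (by linarith [hu1 w] : (0:ℝ) ≤ 1 - u w)]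
    calc (1 - u w) * ‖A' (w, z) - H (w, z)‖ ≤ 1 * (2 * ε) :=
      mul_le_mul (by linarith [hu0 w]) (hA'close (w, z)) (norm_nonneg _) zero_le_one
    _ = 2 * ε := one_mul _
  have t2 : ‖u w • (E (w, z) - H (w, z))‖ ≤ 2 * ε := by
    rcases hEbound with h | h
    · rw [h, norm_zero]; positivity
    · rw [norm_smul, Real.norm_eq_abs, abs_of_nonneg (hu0 w)]
      calc u w * ‖E (w, z) - H (w, z)‖ ≤ 1 * (2 * ε) :=
        mul_le_mul (hu1 w) h (norm_nonneg _) zero_le_one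
      _ = 2 * ε := one_mul _
  calc ‖(1 - u w) • (A' (w, z) - H (w, z)) + u w • (E (w, z) - H (w, z))‖
      ≤ _ + _ := norm_add_le _ _
    _ ≤ 4 * ε := by linarith
end

section assembly

open unitInterval Topology

variable {n : ℕ}

lemma comb_self (t : ℝ) (v : Fin n → ℂ) : (1 - t) • v + t • v = v := by
  rw [← add_smul]
  simp

lemma LF_of_nz {γ : C(Circle1, NonzeroVec n)} (h : IsLaurentLoopNZ γ) :
    LF (fun z => (γ z : Fin n → ℂ)) := h

section helpers
variable {K : Type} [TopologicalSpace K]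

noncomputable def famLoops (G : C(K × Circle1, Fin n → ℂ)) (h0 : ∀ p, G p ≠ 0) :
    C(K, C(Circle1, NonzeroVec n)) :=
  (ContinuousMap.mk (fun p => (⟨G p, h0 p⟩ : NonzeroVec n)) (G.continuous.subtype_mk _)).curry

lemma famLoops_apply (G : C(K × Circle1, Fin n → ℂ)) (h0 : ∀ p, G p ≠ 0) (w : K) (z : Circle1) :
    ((famLoops G h0 w) z : Fin n → ℂ) = G (w, z) := rfl

noncomputable def famVals (q : C(K, C(Circle1, NonzeroVec n))) :
    C(K × Circle1, Fin n → ℂ) :=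
  ContinuousMap.uncurry
    ⟨fun w => (⟨Subtype.val, continuous_subtype_val⟩ : C(NonzeroVec n, Fin n → ℂ)).comp (q w),
      (ContinuousMap.continuous_postcomp _).comp q.continuous⟩

lemma famVals_apply (q : C(K, C(Circle1, NonzeroVec n))) (p : K × Circle1) :
    famVals q p = ((q p.1) p.2 : Fin n → ℂ) := rfl

variable (h0 : 0 < n)

noncomputable def mkY (G : C(K × Circle1, Fin n → ℂ)) (hnz : ∀ p, G p ≠ 0)
    (hb : ∀ w, G (w, Circle1.base) = (NonzeroVec.e1 n h0 : Fin n → ℂ)) :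
    C(K, {γ : C(Circle1, NonzeroVec n) // γ Circle1.base = NonzeroVec.e1 n h0}) :=
  ⟨fun w => ⟨famLoops G hnz w, Subtype.ext (hb w)⟩,
    (famLoops G hnz).continuous.subtype_mk _⟩

noncomputable def mkX (G : C(K × Circle1, Fin n → ℂ)) (hnz : ∀ p, G p ≠ 0)
    (hb : ∀ w, G (w, Circle1.base) = (NonzeroVec.e1 n h0 : Fin n → ℂ))
    (hLF : ∀ w, LF (fun z => G (w, z))) :
    C(K, {γ : C(Circle1, NonzeroVec n) //
      γ Circle1.base = NonzeroVec.e1 n h0 ∧ IsLaurentLoopNZ γ}) :=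
  ⟨fun w => ⟨famLoops G hnz w, Subtype.ext (hb w), hLF w⟩,
    (famLoops G hnz).continuous.subtype_mk _⟩

end helpers

variable (n) (h0 : 0 < n)

def Xsp := {γ : C(Circle1, NonzeroVec n) //
  γ Circle1.base = NonzeroVec.e1 n h0 ∧ IsLaurentLoopNZ γ}
def Ysp := {γ : C(Circle1, NonzeroVec n) // γ Circle1.base = NonzeroVec.e1 n h0}

noncomputable instance : TopologicalSpace (Xsp n h0) := by unfold Xsp; infer_instance
noncomputable instance : TopologicalSpace (Ysp n h0) := by unfold Ysp; infer_instance

noncomputable def incl : C(Xsp n h0, Ysp n h0) :=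
  ⟨fun γ => ⟨γ.1, γ.2.1⟩, Continuous.subtype_mk continuous_subtype_val _⟩

variable {n h0}

lemma pi0_surj : Function.Surjective (incl n h0).mapZerothHomotopy := by
  intro yq
  induction yq using Quotient.inductionOn with
  | h y =>
    set q : C(unitInterval, C(Circle1, NonzeroVec n)) := ContinuousMap.const _ y.1 with hq
    set H : C(unitInterval × Circle1, Fin n → ℂ) := famVals q with hH
    have hH0 : ∀ p, H p ≠ 0 := fun p => (y.1 p.2).2
    set E : C(unitInterval × Circle1, Fin n → ℂ) :=
      ContinuousMap.const _ ((NonzeroVec.e1 n h0 : NonzeroVec n) : Fin n → ℂ) with hE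
    have hbase : ∀ w : unitInterval, H (w, Circle1.base) = (NonzeroVec.e1 n h0 : Fin n → ℂ) := by
      intro w
      show ((y.1 Circle1.base : NonzeroVec n) : Fin n → ℂ) = _
      rw [y.2]
    obtain ⟨G, hGC, hGb, hGLF, hseg⟩ := master (∅ : Set unitInterval) H E hH0
      (by simp) (fun w => (hbase w).symm) (fun w => LF.const _)
    have hG0 : ∀ p, G p ≠ 0 := by
      intro p
      have := hseg p 1 (by norm_num)
      simpa using this
    have hGb' : ∀ w, G (w, Circle1.base) = (NonzeroVec.e1 n h0 : Fin n → ℂ) :=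
      fun w => (hGb w).trans (hbase w)
    -- the Laurent endpoint
    set x : Xsp n h0 := ⟨famLoops G hG0 1, Subtype.ext (hGb' 1), hGLF 1⟩ with hx
    refine ⟨⟦x⟧, ?_⟩
    have hmap : (incl n h0).mapZerothHomotopy ⟦x⟧ = ⟦(incl n h0) x⟧ := rfl
    rw [hmap]
    apply Quotient.sound
    -- path from (incl x) to y through the segment
    set Λ : C(unitInterval × Circle1, Fin n → ℂ) :=
      ⟨fun p => (1 - (p.1 : ℝ)) • H p + (p.1 : ℝ) • G p,
        ((continuous_const.sub
          (continuous_subtype_val.comp continuous_fst)).smul H.continuous).add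
          ((continuous_subtype_val.comp continuous_fst).smul G.continuous)⟩ with hΛ
    have hΛ0 : ∀ p, Λ p ≠ 0 := fun p => hseg p (p.1 : ℝ) p.1.2
    have hΛb : ∀ w, Λ (w, Circle1.base) = (NonzeroVec.e1 n h0 : Fin n → ℂ) := by
      intro w
      show (1 - (w : ℝ)) • H (w, Circle1.base) + (w : ℝ) • G (w, Circle1.base) = _
      rw [hbase w, hGb' w, comb_self]
    set yf : C(unitInterval, Ysp n h0) := mkY h0 Λ hΛ0 hΛb with hyf
    have hsrc : yf 0 = y := by
      apply Subtype.ext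
      apply ContinuousMap.ext
      intro z
      apply Subtype.ext
      show (1 - ((0:unitInterval) : ℝ)) • H (0, z) + ((0:unitInterval) : ℝ) • G (0, z)
        = (y.1 z : Fin n → ℂ)
      norm_num
      rfl
    have htgt : yf 1 = (incl n h0) x := by
      apply Subtype.ext
      apply ContinuousMap.ext
      intro z
      apply Subtype.ext
      show (1 - ((1:unitInterval) : ℝ)) • H (1, z) + ((1:unitInterval) : ℝ) • G (1, z)
        = G (1, z)
      norm_num
    have hjoined : Joined y ((incl n h0) x) :=
      ⟨{ toFun := yf, continuous_toFun := yf.continuous, source' := hsrc, target' := htgt }⟩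
    exact hjoined.symm

lemma pi0_inj : Function.Injective (incl n h0).mapZerothHomotopy := by
  intro a b hab
  induction a using Quotient.inductionOn with
  | h x₀ =>
  induction b using Quotient.inductionOn with
  | h x₁ =>
    have hj : Joined ((incl n h0) x₀) ((incl n h0) x₁) := Quotient.exact hab
    obtain ⟨P⟩ := hj
    set qy : C(unitInterval, C(Circle1, NonzeroVec n)) :=
      ⟨fun t => (P t).1, continuous_subtype_val.comp P.continuous⟩ with hqy
    set H : C(unitInterval × Circle1, Fin n → ℂ) := famVals qy with hH
    have hH0 : ∀ p, H p ≠ 0 := fun p => ((P p.1).1 p.2).2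
    set E : C(unitInterval × Circle1, Fin n → ℂ) :=
      ⟨fun p => (1 - (p.1 : ℝ)) • ((x₀.1 p.2 : NonzeroVec n) : Fin n → ℂ)
          + (p.1 : ℝ) • ((x₁.1 p.2 : NonzeroVec n) : Fin n → ℂ),
        ((continuous_const.sub (continuous_subtype_val.comp continuous_fst)).smul
            (continuous_subtype_val.comp (x₀.1.continuous.comp continuous_snd))).add
          ((continuous_subtype_val.comp continuous_fst).smul
            (continuous_subtype_val.comp (x₁.1.continuous.comp continuous_snd)))⟩ with hE
    have hEC : ∀ w ∈ ({0, 1} : Set unitInterval), ∀ z, E (w, z) = H (w, z) := by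
      intro w hw z
      rcases hw with h | h
      · subst h
        show (1 - ((0:unitInterval) : ℝ)) • _ + ((0:unitInterval) : ℝ) • _
          = ((P 0).1 z : Fin n → ℂ)
        rw [P.source]
        show _ = ((x₀.1 z : NonzeroVec n) : Fin n → ℂ)
        norm_num
      · rw [Set.mem_singleton_iff] at h
        subst h
        show (1 - ((1:unitInterval) : ℝ)) • _ + ((1:unitInterval) : ℝ) • _
          = ((P 1).1 z : Fin n → ℂ)
        rw [P.target]
        show _ = ((x₁.1 z : NonzeroVec n) : Fin n → ℂ)
        norm_num
    have hE1 : ∀ w, E (w, Circle1.base) = H (w, Circle1.base) := by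
      intro w
      show (1 - (w : ℝ)) • ((x₀.1 Circle1.base : NonzeroVec n) : Fin n → ℂ)
          + (w : ℝ) • ((x₁.1 Circle1.base : NonzeroVec n) : Fin n → ℂ)
        = ((P w).1 Circle1.base : Fin n → ℂ)
      rw [x₀.2.1, x₁.2.1, (P w).2, comb_self]
    have hELF : ∀ w, LF (fun z => E (w, z)) := by
      intro w
      exact ((LF_of_nz x₀.2.2).rsmul (1 - (w:ℝ))).add ((LF_of_nz x₁.2.2).rsmul (w:ℝ))
    obtain ⟨G, hGC, hGb, hGLF, hseg⟩ := master ({0, 1} : Set unitInterval) H E hH0 hEC hE1 hELF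
    have hG0 : ∀ p, G p ≠ 0 := by
      intro p
      have := hseg p 1 (by norm_num)
      simpa using this
    have hGb' : ∀ w, G (w, Circle1.base) = (NonzeroVec.e1 n h0 : Fin n → ℂ) := by
      intro w
      rw [hGb w]
      show ((P w).1 Circle1.base : Fin n → ℂ) = _
      rw [(P w).2]
    set xf : C(unitInterval, Xsp n h0) := mkX h0 G hG0 hGb' hGLF with hxf
    have hsrc : xf 0 = x₀ := by
      apply Subtype.ext
      apply ContinuousMap.ext
      intro z
      apply Subtype.ext
      show G (0, z) = ((x₀.1 z : NonzeroVec n) : Fin n → ℂ)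
      rw [hGC 0 (Or.inl rfl) z, hE]
      simp only [ContinuousMap.coe_mk]
      norm_num
    have htgt : xf 1 = x₁ := by
      apply Subtype.ext
      apply ContinuousMap.ext
      intro z
      apply Subtype.ext
      show G (1, z) = ((x₁.1 z : NonzeroVec n) : Fin n → ℂ)
      rw [hGC 1 (Or.inr rfl) z, hE]
      simp only [ContinuousMap.coe_mk]
      norm_num
    exact Quotient.sound
      ⟨{ toFun := xf, continuous_toFun := xf.continuous, source' := hsrc, target' := htgt }⟩

lemma pik_surj (x : Xsp n h0) (k : ℕ) :
    Function.Surjective ((incl n h0).mapHomotopyGroup (Fin k) x) := by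
  intro c
  induction c using Quotient.inductionOn with
  | h p =>
    set qy : C((Fin k → unitInterval), C(Circle1, NonzeroVec n)) :=
      ⟨fun s => (p.1 s).1, continuous_subtype_val.comp p.1.continuous⟩ with hqy
    set H : C((Fin k → unitInterval) × Circle1, Fin n → ℂ) := famVals qy with hH
    have hH0 : ∀ pr, H pr ≠ 0 := fun pr => ((p.1 pr.1).1 pr.2).2
    set E : C((Fin k → unitInterval) × Circle1, Fin n → ℂ) :=
      ⟨fun pr => ((x.1 pr.2 : NonzeroVec n) : Fin n → ℂ),
        continuous_subtype_val.comp (x.1.continuous.comp continuous_snd)⟩ with hE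
    have hEC : ∀ s ∈ Cube.boundary (Fin k), ∀ z, E (s, z) = H (s, z) := by
      intro s hs z
      show ((x.1 z : NonzeroVec n) : Fin n → ℂ) = (((p.1 s).1 z : NonzeroVec n) : Fin n → ℂ)
      rw [p.2 s hs]
      rfl
    have hbase : ∀ s, H (s, Circle1.base) = (NonzeroVec.e1 n h0 : Fin n → ℂ) :=
      fun s => congrArg Subtype.val (p.1 s).2
    have hE1 : ∀ s, E (s, Circle1.base) = H (s, Circle1.base) := by
      intro s
      rw [hbase s]
      exact congrArg Subtype.val x.2.1
    have hELF : ∀ s, LF (fun z => E (s, z)) := fun s => LF_of_nz x.2.2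
    obtain ⟨G, hGC, hGb, hGLF, hseg⟩ := master (Cube.boundary (Fin k)) H E hH0 hEC hE1 hELF
    have hG0 : ∀ pr, G pr ≠ 0 := by
      intro pr
      have := hseg pr 1 (by norm_num)
      simpa using this
    have hGb' : ∀ s, G (s, Circle1.base) = (NonzeroVec.e1 n h0 : Fin n → ℂ) :=
      fun s => (hGb s).trans (hbase s)
    set xf : C((Fin k → unitInterval), Xsp n h0) := mkX h0 G hG0 hGb' hGLF with hxf
    have hgbd : ∀ s ∈ Cube.boundary (Fin k), xf s = x := by
      intro s hs
      apply Subtype.ext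
      apply ContinuousMap.ext
      intro z
      apply Subtype.ext
      show G (s, z) = ((x.1 z : NonzeroVec n) : Fin n → ℂ)
      rw [hGC s hs z]
      rfl
    refine ⟨⟦(⟨xf, hgbd⟩ : GenLoop (Fin k) (Xsp n h0) x)⟧, ?_⟩
    have hmap : (incl n h0).mapHomotopyGroup (Fin k) x ⟦(⟨xf, hgbd⟩ : GenLoop (Fin k) (Xsp n h0) x)⟧
        = ⟦(⟨(incl n h0).comp xf, fun y hy => by simp [hgbd y hy]⟩ :
            GenLoop (Fin k) (Ysp n h0) ((incl n h0) x))⟧ := rfl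
    rw [hmap]
    apply Quotient.sound
    set Λ : C((unitInterval × (Fin k → unitInterval)) × Circle1, Fin n → ℂ) :=
      ⟨fun q => (1 - (q.1.1 : ℝ)) • G (q.1.2, q.2) + (q.1.1 : ℝ) • H (q.1.2, q.2),
        by
          have ct : Continuous fun q : (unitInterval × (Fin k → unitInterval)) × Circle1 =>
              (q.1.1 : ℝ) :=
            continuous_subtype_val.comp (continuous_fst.comp continuous_fst)
          have cpr : Continuous fun q : (unitInterval × (Fin k → unitInterval)) × Circle1 =>
              (q.1.2, q.2) :=
            (continuous_snd.comp continuous_fst).prodMk continuous_snd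
          exact ((continuous_const.sub ct).smul (G.continuous.comp cpr)).add
            (ct.smul (H.continuous.comp cpr))⟩ with hΛ
    have hΛ0 : ∀ q, Λ q ≠ 0 := by
      intro q hq0
      have hm : (1 - (q.1.1 : ℝ)) ∈ Set.Icc (0:ℝ) 1 :=
        ⟨by linarith [(q.1.1).2.2], by linarith [(q.1.1).2.1]⟩
      apply hseg (q.1.2, q.2) (1 - (q.1.1 : ℝ)) hm
      have heq : (1 - (1 - (q.1.1:ℝ))) • H (q.1.2, q.2) + (1 - (q.1.1:ℝ)) • G (q.1.2, q.2)
          = (1 - (q.1.1:ℝ)) • G (q.1.2, q.2) + (q.1.1:ℝ) • H (q.1.2, q.2) := by module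
      rw [heq]
      exact hq0
    have hΛb : ∀ w, Λ (w, Circle1.base) = (NonzeroVec.e1 n h0 : Fin n → ℂ) := by
      intro w
      show (1 - (w.1 : ℝ)) • G (w.2, Circle1.base) + (w.1 : ℝ) • H (w.2, Circle1.base) = _
      rw [hGb' w.2, hbase w.2, comb_self]
    set yΦ : C(unitInterval × (Fin k → unitInterval), Ysp n h0) := mkY h0 Λ hΛ0 hΛb with hyΦ
    refine ⟨{ toContinuousMap := yΦ, map_zero_left := ?_, map_one_left := ?_, prop' := ?_ }⟩
    · intro s
      apply Subtype.ext
      apply ContinuousMap.ext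
      intro z
      apply Subtype.ext
      show (1 - ((0:unitInterval) : ℝ)) • G (s, z) + ((0:unitInterval) : ℝ) • H (s, z) = G (s, z)
      norm_num
    · intro s
      apply Subtype.ext
      apply ContinuousMap.ext
      intro z
      apply Subtype.ext
      show (1 - ((1:unitInterval) : ℝ)) • G (s, z) + ((1:unitInterval) : ℝ) • H (s, z)
        = (((p.1 s).1 z : NonzeroVec n) : Fin n → ℂ)
      norm_num
      rfl
    · intro t s hs
      apply Subtype.ext
      apply ContinuousMap.ext
      intro z
      apply Subtype.ext
      have hGx : G (s, z) = ((x.1 z : NonzeroVec n) : Fin n → ℂ) := by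
        rw [hGC s hs z]; rfl
      have hHx : H (s, z) = ((x.1 z : NonzeroVec n) : Fin n → ℂ) := by
        show (((p.1 s).1 z : NonzeroVec n) : Fin n → ℂ) = _
        rw [p.2 s hs]
        rfl
      show (1 - (t : ℝ)) • G (s, z) + (t : ℝ) • H (s, z) = G (s, z)
      rw [hGx, hHx, comb_self]

lemma pik_inj (x : Xsp n h0) (k : ℕ) :
    Function.Injective ((incl n h0).mapHomotopyGroup (Fin k) x) := by
  intro a b hab
  induction a using Quotient.inductionOn with
  | h g₀ =>
  induction b using Quotient.inductionOn with
  | h g₁ =>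
    have hrel : ((incl n h0).comp g₀.1).HomotopicRel ((incl n h0).comp g₁.1)
        (Cube.boundary (Fin k)) := Quotient.exact hab
    obtain ⟨Ht⟩ := hrel
    set qy : C(unitInterval × (Fin k → unitInterval), C(Circle1, NonzeroVec n)) :=
      ⟨fun w => (Ht w).1, continuous_subtype_val.comp Ht.continuous⟩ with hqy
    set H : C((unitInterval × (Fin k → unitInterval)) × Circle1, Fin n → ℂ) :=
      famVals qy with hH
    have hH0 : ∀ pr, H pr ≠ 0 := fun pr => ((Ht pr.1).1 pr.2).2
    set qg₀ : C((Fin k → unitInterval), C(Circle1, NonzeroVec n)) :=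
      ⟨fun s => (g₀.1 s).1, continuous_subtype_val.comp g₀.1.continuous⟩ with hqg₀
    set qg₁ : C((Fin k → unitInterval), C(Circle1, NonzeroVec n)) :=
      ⟨fun s => (g₁.1 s).1, continuous_subtype_val.comp g₁.1.continuous⟩ with hqg₁
    set E : C((unitInterval × (Fin k → unitInterval)) × Circle1, Fin n → ℂ) :=
      ⟨fun q => (1 - (q.1.1 : ℝ)) • famVals qg₀ (q.1.2, q.2)
          + (q.1.1 : ℝ) • famVals qg₁ (q.1.2, q.2),
        by
          have ct : Continuous fun q : (unitInterval × (Fin k → unitInterval)) × Circle1 =>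
              (q.1.1 : ℝ) :=
            continuous_subtype_val.comp (continuous_fst.comp continuous_fst)
          have cpr : Continuous fun q : (unitInterval × (Fin k → unitInterval)) × Circle1 =>
              (q.1.2, q.2) :=
            (continuous_snd.comp continuous_fst).prodMk continuous_snd
          exact ((continuous_const.sub ct).smul ((famVals qg₀).continuous.comp cpr)).add
            (ct.smul ((famVals qg₁).continuous.comp cpr))⟩ with hE
    set Cset : Set (unitInterval × (Fin k → unitInterval)) :=
      {w | w.1 = 0 ∨ w.1 = 1 ∨ w.2 ∈ Cube.boundary (Fin k)} with hCset
    have hEC : ∀ w ∈ Cset, ∀ z, E (w, z) = H (w, z) := by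
      rintro ⟨t, s⟩ hw z
      rcases hw with h | h | h
      · simp only at h
        subst h
        show (1 - ((0:unitInterval) : ℝ)) • ((g₀.1 s).1 z : Fin n → ℂ)
            + ((0:unitInterval) : ℝ) • ((g₁.1 s).1 z : Fin n → ℂ)
          = ((Ht (0, s)).1 z : Fin n → ℂ)
        rw [Ht.apply_zero]
        show _ = ((g₀.1 s).1 z : Fin n → ℂ)
        norm_num
      · simp only at h
        subst h
        show (1 - ((1:unitInterval) : ℝ)) • ((g₀.1 s).1 z : Fin n → ℂ)
            + ((1:unitInterval) : ℝ) • ((g₁.1 s).1 z : Fin n → ℂ)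
          = ((Ht (1, s)).1 z : Fin n → ℂ)
        rw [Ht.apply_one]
        show _ = ((g₁.1 s).1 z : Fin n → ℂ)
        norm_num
      · simp only at h
        show (1 - (t : ℝ)) • ((g₀.1 s).1 z : Fin n → ℂ)
            + (t : ℝ) • ((g₁.1 s).1 z : Fin n → ℂ)
          = ((Ht (t, s)).1 z : Fin n → ℂ)
        rw [Ht.eq_fst t h, g₀.2 s h, g₁.2 s h]
        show (1 - (t : ℝ)) • ((x.1 z : NonzeroVec n) : Fin n → ℂ)
            + (t : ℝ) • ((x.1 z : NonzeroVec n) : Fin n → ℂ) = _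
        rw [comb_self, ContinuousMap.comp_apply, g₀.2 s h]
        rfl
    have hbase : ∀ w, H (w, Circle1.base) = (NonzeroVec.e1 n h0 : Fin n → ℂ) :=
      fun w => congrArg Subtype.val (Ht w).2
    have hE1 : ∀ w, E (w, Circle1.base) = H (w, Circle1.base) := by
      intro w
      rw [hbase w]
      show (1 - (w.1 : ℝ)) • ((g₀.1 w.2).1 Circle1.base : Fin n → ℂ)
          + (w.1 : ℝ) • ((g₁.1 w.2).1 Circle1.base : Fin n → ℂ) = _
      rw [congrArg Subtype.val (g₀.1 w.2).2.1, congrArg Subtype.val (g₁.1 w.2).2.1, comb_self]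
    have hELF : ∀ w, LF (fun z => E (w, z)) := fun w =>
      ((LF_of_nz (g₀.1 w.2).2.2).rsmul (1 - (w.1:ℝ))).add
        ((LF_of_nz (g₁.1 w.2).2.2).rsmul (w.1:ℝ))
    obtain ⟨G, hGC, hGb, hGLF, hseg⟩ := master Cset H E hH0 hEC hE1 hELF
    have hG0 : ∀ pr, G pr ≠ 0 := by
      intro pr
      have := hseg pr 1 (by norm_num)
      simpa using this
    have hGb' : ∀ w, G (w, Circle1.base) = (NonzeroVec.e1 n h0 : Fin n → ℂ) :=
      fun w => (hGb w).trans (hbase w)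
    set xΦ : C(unitInterval × (Fin k → unitInterval), Xsp n h0) :=
      mkX h0 G hG0 hGb' hGLF with hxΦ
    apply Quotient.sound
    refine ⟨{ toContinuousMap := xΦ, map_zero_left := ?_, map_one_left := ?_, prop' := ?_ }⟩
    · intro s
      apply Subtype.ext
      apply ContinuousMap.ext
      intro z
      apply Subtype.ext
      show G ((0, s), z) = ((g₀.1 s).1 z : Fin n → ℂ)
      rw [hGC (0, s) (Or.inl rfl) z]
      show (1 - ((0:unitInterval) : ℝ)) • ((g₀.1 s).1 z : Fin n → ℂ)
          + ((0:unitInterval) : ℝ) • ((g₁.1 s).1 z : Fin n → ℂ) = _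
      norm_num
    · intro s
      apply Subtype.ext
      apply ContinuousMap.ext
      intro z
      apply Subtype.ext
      show G ((1, s), z) = ((g₁.1 s).1 z : Fin n → ℂ)
      rw [hGC (1, s) (Or.inr (Or.inl rfl)) z]
      show (1 - ((1:unitInterval) : ℝ)) • ((g₀.1 s).1 z : Fin n → ℂ)
          + ((1:unitInterval) : ℝ) • ((g₁.1 s).1 z : Fin n → ℂ) = _
      norm_num
    · intro t s hs
      apply Subtype.ext
      apply ContinuousMap.ext
      intro z
      apply Subtype.ext
      show G ((t, s), z) = ((g₀.1 s).1 z : Fin n → ℂ)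
      rw [hGC (t, s) (Or.inr (Or.inr hs)) z]
      show (1 - (t : ℝ)) • ((g₀.1 s).1 z : Fin n → ℂ)
          + (t : ℝ) • ((g₁.1 s).1 z : Fin n → ℂ) = _
      rw [g₀.2 s hs, g₁.2 s hs]
      show (1 - (t : ℝ)) • ((x.1 z : NonzeroVec n) : Fin n → ℂ)
          + (t : ℝ) • ((x.1 z : NonzeroVec n) : Fin n → ℂ) = _
      rw [comb_self]
end assembly


/-- For `n ≥ 2`, the inclusion of the space of based Laurent-polynomial loops in
`ℂⁿ ∖ {0}` into the space of all based continuous loops in `ℂⁿ ∖ {0}` is a weak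
homotopy equivalence. -/
theorem laurent_loops_in_nonzero_vectors_weak_homotopy_equivalence (n : ℕ) (hn : 2 ≤ n) :
    ContinuousMap.IsWeakHomotopyEquiv
      (X := {γ : C(Circle1, NonzeroVec n) //
        γ Circle1.base = NonzeroVec.e1 n (by omega) ∧ IsLaurentLoopNZ γ})
      (Y := {γ : C(Circle1, NonzeroVec n) // γ Circle1.base = NonzeroVec.e1 n (by omega)})
      ⟨fun γ => ⟨γ.1, γ.2.1⟩, by
        exact Continuous.subtype_mk continuous_subtype_val _⟩ := by
  have h0 : 0 < n := by omega
  exact ⟨⟨pi0_inj (n := n) (h0 := h0), pi0_surj (n := n) (h0 := h0)⟩,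
    fun x k => ⟨pik_inj x k, pik_surj x k⟩⟩
end

section
/- Let A(z) = Σ_{i=0}^{N} A_i zⁱ be an n×n matrix whose entries are polynomials in z with complex coefficients, such that A(z) is a unitary matrix for every z ∈ ℂ with |z| = 1, and A(1) = I. Then there exist r ≥ 0 and linear subspaces E₁, …, E_r ⊆ ℂⁿ such that A(z) = p_{E₁}(z) · p_{E₂}(z) · ⋯ · p_{E_r}(z) for all z ∈ ℂ. -/
/-- The `n × n` matrix with polynomial entries `z ↦ ∑_{i=0}^{N} A_i zⁱ`. -/
noncomputable def polyMat {n : ℕ} (N : ℕ) (A : ℕ → Matrix (Fin n) (Fin n) ℂ) (z : ℂ) :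
    Matrix (Fin n) (Fin n) ℂ :=
  ∑ i ∈ Finset.range (N + 1), z ^ i • A i

/-- `P` is the matrix of the orthogonal projection of `ℂⁿ` onto the subspace `E`:
it is idempotent, Hermitian, and has range `E` (fixing `E` pointwise). -/
def IsOrthProjOnto {n : ℕ} (P : Matrix (Fin n) (Fin n) ℂ)
    (E : Submodule ℂ (Fin n → ℂ)) : Prop :=
  P * P = P ∧ P.conjTranspose = P ∧ (∀ v, P.mulVec v ∈ E) ∧ (∀ v ∈ E, P.mulVec v = v)

lemma circle_infinite : {z : ℂ | ‖z‖ = 1}.Infinite := by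
  have hne : ∀ t : ℝ, (t : ℂ) + Complex.I ≠ 0 := by
    intro t h0
    have := congrArg Complex.im h0
    simp at this
  have hinj : Function.Injective (fun t : ℝ => ((t : ℂ) - Complex.I) / ((t : ℂ) + Complex.I)) := by
    intro t s h
    rw [div_eq_div_iff (hne t) (hne s)] at h
    have h3 : (t : ℂ) - s = 0 := by
      have h2 : (2 * Complex.I) * ((t : ℂ) - s) = 0 := by linear_combination h
      rcases mul_eq_zero.mp h2 with h | h
      · exact absurd h (by simp [Complex.I_ne_zero])
      · exact h
    exact_mod_cast sub_eq_zero.mp h3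
  apply Set.infinite_of_injective_forall_mem hinj
  intro t
  have habs : ‖(t : ℂ) - Complex.I‖ = ‖(t : ℂ) + Complex.I‖ := by
    rw [Complex.norm_def, Complex.norm_def]
    congr 1
    simp [Complex.normSq_apply]
  simp only [Set.mem_setOf_eq, norm_div, habs]
  exact div_self (by simpa using hne t)

open Matrix in
lemma exists_proj (n : ℕ) (M B : Matrix (Fin n) (Fin n) ℂ) (hMB : Mᴴ * B = 0) :
    ∃ (E : Submodule ℂ (Fin n → ℂ)) (P : Matrix (Fin n) (Fin n) ℂ),
      IsOrthProjOnto P E ∧ P * B = 0 ∧ (1 - P) * M = 0 := by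
  classical
  set e := WithLp.equiv 2 (Fin n → ℂ) with he
  set E' : Submodule ℂ (EuclideanSpace ℂ (Fin n)) := LinearMap.range (Matrix.toEuclideanLin M)
    with hE'
  set Pl : EuclideanSpace ℂ (Fin n) →ₗ[ℂ] EuclideanSpace ℂ (Fin n) :=
    E'.subtype ∘ₗ (E'.orthogonalProjectionOnto : _ →L[ℂ] _).toLinearMap with hPl
  set P : Matrix (Fin n) (Fin n) ℂ := Matrix.toEuclideanLin.symm Pl with hP
  have hlin : Matrix.toEuclideanLin P = Pl := LinearEquiv.apply_symm_apply _ _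
  have hPapp : ∀ v : Fin n → ℂ, P *ᵥ v = e (Pl (e.symm v)) := by
    intro v
    have := Matrix.toEuclideanLin_apply_piLp_toLp (𝕜 := ℂ) P v
    rw [hlin] at this
    rw [he, WithLp.equiv_symm_apply, this]; rfl
  have hPlself : ∀ x, x ∈ E' → Pl x = x := by
    intro x hx
    have := Submodule.orthogonalProjectionOnto_mem_subspace_eq_self (K := E') ⟨x, hx⟩
    simp [hPl, ContinuousLinearMap.coe_coe]
    exact Submodule.starProjection_eq_self_iff.mpr hx
  have hPlmem : ∀ x, Pl x ∈ E' := fun x => (E'.orthogonalProjectionOnto x).2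
  have hPP : P * P = P := by
    apply Matrix.toEuclideanLin.injective
    have : Matrix.toEuclideanLin (P * P) = Pl ∘ₗ Pl := by
      apply LinearMap.ext; intro x
      rw [Matrix.toEuclideanLin_apply, ← Matrix.mulVec_mulVec]
      rw [hPapp, hPapp]
      simp only [LinearMap.comp_apply, ← he]
      rw [he, WithLp.equiv_symm_apply, WithLp.toLp_ofLp]
      simp
    rw [this, hlin]
    apply LinearMap.ext; intro x
    exact hPlself (Pl x) (hPlmem x)
  have hadj : LinearMap.adjoint Pl = Pl := by
    symm
    rw [LinearMap.eq_adjoint_iff]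
    intro x y
    simpa [hPl] using Submodule.inner_starProjection_left_eq_right E' x y
  have hPH : Pᴴ = P := by
    apply Matrix.toEuclideanLin.injective
    rw [Matrix.toEuclideanLin_conjTranspose_eq_adjoint, hlin, hadj]
  refine ⟨E'.map (WithLp.linearEquiv 2 ℂ (Fin n → ℂ) : EuclideanSpace ℂ (Fin n) →ₗ[ℂ] (Fin n → ℂ)), P, ⟨hPP, hPH, ?_, ?_⟩, ?_, ?_⟩
  · intro v
    rw [hPapp]
    exact Submodule.mem_map_of_mem (hPlmem (e.symm v))
  · intro v hv
    obtain ⟨x, hx, rfl⟩ := hv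
    have h1 : (WithLp.linearEquiv 2 ℂ (Fin n → ℂ) : EuclideanSpace ℂ (Fin n) →ₗ[ℂ] (Fin n → ℂ)) x = e x := rfl
    rw [h1, hPapp, Equiv.symm_apply_apply, hPlself x hx]
  · -- P * B = 0
    apply Matrix.toEuclideanLin.injective
    rw [map_zero]
    apply LinearMap.ext; intro x
    rw [Matrix.toEuclideanLin_apply, ← Matrix.mulVec_mulVec, hPapp]
    have hzero : Pl (e.symm (B *ᵥ e x)) = 0 := by
      have hmem : e.symm (B *ᵥ e x) ∈ E'ᗮ := by
        rw [Submodule.mem_orthogonal]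
        rintro u ⟨y, rfl⟩
        rw [EuclideanSpace.inner_eq_star_dotProduct]
        have h1 : (Matrix.toEuclideanLin M y).ofLp = M *ᵥ e y := rfl
        have h2 : (e.symm (B *ᵥ e x)).ofLp = B *ᵥ e x := rfl
        rw [h1, h2, Matrix.star_mulVec, dotProduct_comm, ← Matrix.dotProduct_mulVec,
          Matrix.mulVec_mulVec, hMB]
        simp
      have := Submodule.orthogonalProjectionOnto_apply_of_mem_orthogonal hmem
      simp [hPl, ContinuousLinearMap.coe_coe, this]
    rw [show x.ofLp = e x from rfl, hzero]
    simp [he]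
  · -- (1 - P) * M = 0
    rw [sub_mul, one_mul, sub_eq_zero]
    apply Matrix.toEuclideanLin.injective
    apply LinearMap.ext; intro x
    rw [Matrix.toEuclideanLin_apply, Matrix.toEuclideanLin_apply, ← Matrix.mulVec_mulVec, hPapp]
    have hmem : e.symm (M *ᵥ e x) ∈ E' := ⟨x, rfl⟩
    rw [show x.ofLp = e x from rfl, hPlself _ hmem, Equiv.apply_symm_apply]

open Matrix Finset in
lemma coeff_extract (n N : ℕ) (A : ℕ → Matrix (Fin n) (Fin n) ℂ)
    (hU : ∀ z : ℂ, ‖z‖ = 1 →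
      star (polyMat (N + 1) A z) * polyMat (N + 1) A z = 1) :
    (A 0)ᴴ * A (N + 1) = 0 := by
  classical
  set C : ℕ → ℕ → Matrix (Fin n) (Fin n) ℂ := fun i j => (A i)ᴴ * A j with hC
  have key : ∀ z : ℂ, ‖z‖ = 1 →
      ∑ i ∈ range (N + 2), ∑ j ∈ range (N + 2), z ^ (N + 1 - i + j) • C i j
        = z ^ (N + 1) • (1 : Matrix (Fin n) (Fin n) ℂ) := by
    intro z hz
    have hz1 : z * (starRingEnd ℂ) z = 1 := by
      rw [Complex.mul_conj]
      norm_cast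
      rw [Complex.normSq_eq_norm_sq, hz]; norm_num
    have hpow : ∀ i, i ≤ N + 1 → z ^ (N + 1) * ((starRingEnd ℂ) z) ^ i = z ^ (N + 1 - i) := by
      intro i hi
      have h1 : z ^ (N + 1) = z ^ (N + 1 - i) * z ^ i := by
        rw [← pow_add]; congr 1; omega
      rw [h1, mul_assoc, ← mul_pow, hz1, one_pow, mul_one]
    have hstar : star (polyMat (N + 1) A z)
        = ∑ i ∈ range (N + 2), ((starRingEnd ℂ) z) ^ i • (A i)ᴴ := by
      unfold polyMat
      rw [star_sum]
      refine Finset.sum_congr rfl fun i _ => ?_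
      rw [star_smul, star_pow]
      rfl
    calc ∑ i ∈ range (N + 2), ∑ j ∈ range (N + 2), z ^ (N + 1 - i + j) • C i j
        = ∑ i ∈ range (N + 2), ∑ j ∈ range (N + 2),
            (z ^ (N + 1) * ((starRingEnd ℂ) z) ^ i * z ^ j) • C i j := by
          refine Finset.sum_congr rfl fun i hi => Finset.sum_congr rfl fun j hj => ?_
          rw [pow_add, hpow i (by simpa using Nat.lt_succ_iff.mp (mem_range.mp hi))]
      _ = z ^ (N + 1) • (star (polyMat (N + 1) A z) * polyMat (N + 1) A z) := by
          rw [hstar]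
          unfold polyMat
          rw [Finset.sum_mul_sum, Finset.smul_sum]
          refine Finset.sum_congr rfl fun i hi => ?_
          rw [Finset.smul_sum]
          refine Finset.sum_congr rfl fun j hj => ?_
          rw [smul_mul_smul_comm, smul_smul, hC, mul_assoc]
      _ = z ^ (N + 1) • (1 : Matrix (Fin n) (Fin n) ℂ) := by rw [hU z hz]
  ext a b
  have hpoly : (∑ i ∈ range (N + 2), ∑ j ∈ range (N + 2),
      Polynomial.C (C i j a b) * Polynomial.X ^ (N + 1 - i + j))
      = Polynomial.C ((1 : Matrix (Fin n) (Fin n) ℂ) a b) * Polynomial.X ^ (N + 1) := by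
    apply Polynomial.eq_of_infinite_eval_eq
    apply circle_infinite.mono
    intro z hz
    have := congrArg (fun M : Matrix (Fin n) (Fin n) ℂ => M a b) (key z hz)
    simp only [Matrix.sum_apply, Matrix.smul_apply, smul_eq_mul, Matrix.one_apply] at this
    simp only [Set.mem_setOf_eq, Polynomial.eval_finset_sum, Polynomial.eval_mul,
      Polynomial.eval_C, Polynomial.eval_pow, Polynomial.eval_X]
    rw [mul_comm, Matrix.one_apply, ← this]
    exact Finset.sum_congr rfl fun i _ => Finset.sum_congr rfl fun j _ => by
      rw [mul_comm]
  have hc := congrArg (fun p => Polynomial.coeff p (2 * (N + 1))) hpoly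
  simp only [Polynomial.finset_sum_coeff, Polynomial.coeff_C_mul, Polynomial.coeff_X_pow] at hc
  rw [Finset.sum_eq_single 0, Finset.sum_eq_single (N + 1)] at hc
  · rw [if_pos (by omega), mul_one, if_neg (by omega), mul_zero] at hc
    simpa [hC] using hc
  · intro j hj hjne
    rw [if_neg (by rw [Finset.mem_range] at hj; omega), mul_zero]
  · intro h
    exact absurd (Finset.self_mem_range_succ (N + 1)) h
  · intro i hi hine
    apply Finset.sum_eq_zero
    intro j hj
    rw [Finset.mem_range] at hi hj
    rw [if_neg (by omega), mul_zero]
  · intro h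
    exact absurd (Finset.mem_range.mpr (by omega)) h

open Finset in
lemma factor_step {n : ℕ} (N : ℕ) (A : ℕ → Matrix (Fin n) (Fin n) ℂ)
    (P : Matrix (Fin n) (Fin n) ℂ) (hPP : P * P = P)
    (h0 : P * A 0 = 0) (htop : (1 - P) * A (N + 1) = 0) (z : ℂ) :
    polyMat (N + 1) A z
      = (z • P + (1 - P)) * polyMat N (fun i => P * A (i + 1) + (1 - P) * A i) z := by
  have hPQ : P * (1 - P) = 0 := by rw [mul_sub, mul_one, hPP, sub_self]
  have hQP : (1 - P) * P = 0 := by rw [sub_mul, one_mul, hPP, sub_self]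
  have hQQ : (1 - P) * (1 - P) = 1 - P := by rw [sub_mul, one_mul, mul_sub, mul_one, hPP]; simp
  unfold polyMat
  rw [Finset.mul_sum]
  have hterm : ∀ i, (z • P + (1 - P)) * (z ^ i • (P * A (i + 1) + (1 - P) * A i))
      = z ^ (i + 1) • (P * A (i + 1)) + z ^ i • ((1 - P) * A i) := by
    intro i
    rw [Matrix.mul_smul, add_mul, Matrix.smul_mul, mul_add, mul_add]
    rw [← mul_assoc, ← mul_assoc, hPP, hPQ, zero_mul, add_zero]
    rw [← mul_assoc, ← mul_assoc, hQP, zero_mul, zero_add, hQQ]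
    rw [smul_add, smul_smul, ← pow_succ]
  simp only [hterm]
  rw [Finset.sum_add_distrib]
  have h1 : ∑ i ∈ range (N + 1), z ^ (i + 1) • (P * A (i + 1))
      = ∑ i ∈ range (N + 2), z ^ i • (P * A i) := by
    rw [Finset.sum_range_succ' (fun i => z ^ i • (P * A i)) (N + 1)]
    simp [h0]
  have h2 : ∑ i ∈ range (N + 1), z ^ i • ((1 - P) * A i)
      = ∑ i ∈ range (N + 2), z ^ i • ((1 - P) * A i) := by
    rw [Finset.sum_range_succ (fun i => z ^ i • ((1 - P) * A i)) (N + 1)]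
    simp [htop]
  rw [h1, h2, ← Finset.sum_add_distrib]
  refine Finset.sum_congr rfl fun i _ => ?_
  rw [← smul_add, ← add_mul, add_sub_cancel, one_mul]

open Matrix in
lemma pz_unitary {n : ℕ} (P : Matrix (Fin n) (Fin n) ℂ) (hPP : P * P = P) (hPH : Pᴴ = P)
    (z : ℂ) (hz : ‖z‖ = 1) :
    (z • P + (1 - P)) ∈ Matrix.unitaryGroup (Fin n) ℂ := by
  have hz1 : (starRingEnd ℂ) z * z = 1 := by
    rw [mul_comm, Complex.mul_conj]
    norm_cast
    rw [Complex.normSq_eq_norm_sq, hz]; norm_num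
  have hPQ : P * (1 - P) = 0 := by rw [mul_sub, mul_one, hPP, sub_self]
  have hQP : (1 - P) * P = 0 := by rw [sub_mul, one_mul, hPP, sub_self]
  have hQQ : (1 - P) * (1 - P) = 1 - P := by rw [sub_mul, one_mul, mul_sub, mul_one, hPP]; simp
  have hstar : star (z • P + (1 - P)) = (starRingEnd ℂ) z • P + (1 - P) := by
    have : star (z • P + (1 - P)) = (starRingEnd ℂ) z • Pᴴ + (1 - Pᴴ) := by
      simp [star_add, star_smul, Matrix.star_eq_conjTranspose, star_sub]
    rw [this, hPH]
  constructor
  · rw [hstar, add_mul, mul_add, mul_add, Matrix.smul_mul, Matrix.smul_mul, Matrix.mul_smul,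
      Matrix.mul_smul, hPP, hPQ, hQP, hQQ, smul_zero, smul_zero, add_zero, zero_add,
      smul_smul, hz1, one_smul, add_sub_cancel]
  · rw [hstar, add_mul, mul_add, mul_add, Matrix.smul_mul, Matrix.smul_mul, Matrix.mul_smul,
      Matrix.mul_smul, hPP, hPQ, hQP, hQQ, smul_zero, smul_zero, add_zero, zero_add,
      smul_smul, mul_comm, hz1, one_smul, add_sub_cancel]

/-- Every matrix `A(z) = ∑_{i=0}^{N} A_i zⁱ` with polynomial entries, unitary for all
`|z| = 1` and with `A(1) = I`, factors as a product `p_{E₁}(z) ⋯ p_{E_r}(z)`, where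
`p_E(z) = z·π_E + π_{E^⊥} = z • P + (1 - P)` for the orthogonal projection `P` onto `E`. -/
theorem polynomial_unitary_loop_factorization (n N : ℕ)
    (A : ℕ → Matrix (Fin n) (Fin n) ℂ)
    (hU : ∀ z : ℂ, ‖z‖ = 1 → polyMat N A z ∈ Matrix.unitaryGroup (Fin n) ℂ)
    (hI : polyMat N A 1 = 1) :
    ∃ (r : ℕ) (E : Fin r → Submodule ℂ (Fin n → ℂ))
      (P : Fin r → Matrix (Fin n) (Fin n) ℂ),
      (∀ k, IsOrthProjOnto (P k) (E k)) ∧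
      ∀ z : ℂ, polyMat N A z = (List.ofFn fun k : Fin r => z • P k + (1 - P k)).prod := by
  induction N generalizing A with
  | zero =>
    refine ⟨0, Fin.elim0, Fin.elim0, fun k => k.elim0, fun z => ?_⟩
    have h1 : polyMat 0 A z = A 0 := by simp [polyMat]
    have h2 : A 0 = 1 := by simpa [polyMat] using hI
    simp [h1, h2]
  | succ N ih =>
    have hU' : ∀ z : ℂ, ‖z‖ = 1 →
        star (polyMat (N + 1) A z) * polyMat (N + 1) A z = 1 := by
      intro z hz
      exact (Unitary.mem_iff.mp (hU z hz)).1
    have hAB : (A 0).conjTranspose * A (N + 1) = 0 := coeff_extract n N A hU'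
    have hMB : (A (N + 1)).conjTranspose * A 0 = 0 := by
      have := congrArg Matrix.conjTranspose hAB
      simpa [Matrix.conjTranspose_mul] using this
    obtain ⟨E, P, hproj, hPB, hPM⟩ := exists_proj n (A (N + 1)) (A 0) hMB
    set Bc : ℕ → Matrix (Fin n) (Fin n) ℂ := fun i => P * A (i + 1) + (1 - P) * A i with hBc
    have hfac : ∀ z : ℂ, polyMat (N + 1) A z = (z • P + (1 - P)) * polyMat N Bc z :=
      fun z => factor_step N A P hproj.1 hPB hPM z
    have hpz : ∀ z : ℂ, ‖z‖ = 1 →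
        (z • P + (1 - P)) ∈ Matrix.unitaryGroup (Fin n) ℂ :=
      fun z hz => pz_unitary P hproj.1 hproj.2.1 z hz
    have hUB : ∀ z : ℂ, ‖z‖ = 1 → polyMat N Bc z ∈ Matrix.unitaryGroup (Fin n) ℂ := by
      intro z hz
      have heq : polyMat N Bc z = star (z • P + (1 - P)) * polyMat (N + 1) A z := by
        rw [hfac z, ← mul_assoc, (Unitary.mem_iff.mp (hpz z hz)).1, one_mul]
      rw [heq]
      exact mul_mem (Unitary.star_mem (hpz z hz)) (hU z hz)
    have hIB : polyMat N Bc 1 = 1 := by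
      have := hfac 1
      rw [hI, one_smul, add_sub_cancel, one_mul] at this
      exact this.symm
    obtain ⟨r, E', P', hproj', hprod⟩ := ih Bc hUB hIB
    refine ⟨r + 1, Fin.cons E E', Fin.cons P P', ?_, ?_⟩
    · intro k
      refine Fin.cases ?_ ?_ k
      · simpa using hproj
      · intro i; simpa using hproj' i
    · intro z
      rw [List.ofFn_succ]
      simp only [Fin.cons_zero, Fin.cons_succ, List.prod_cons]
      rw [hfac z, hprod z]
end

section
/- Decompose ℂⁿ orthogonally as ℂⁿ = V ⊕ W, where V is the span of the first p standard basis vectors and W the span of the remaining q = n − p. Let A(z) = Σ_{i=0}^{N} A_i zⁱ be an n×n matrix with polynomial entries such that A(z) is unitary for every z with |z| = 1 and A(1) = I. Then A factors as A(z) = B(z) · C(z), where: B and C are n×n matrices with polynomial entries that are unitary for |z| = 1 and equal I at z = 1; C is a finite product p_{E₁}(z) · ⋯ · p_{E_s}(z) with each subspace E_i ⊆ W; and the constant term B(0) = B₀ satisfies ker(B₀) ∩ W = {0}. -/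
/-- The subspace `W ⊆ ℂⁿ` spanned by the standard basis vectors `e_j` with `j ≥ p`. -/
noncomputable def tailSubspace (n p : ℕ) : Submodule ℂ (Fin n → ℂ) :=
  Submodule.span ℂ {v | ∃ j : Fin n, p ≤ (j : ℕ) ∧ v = Pi.single j 1}

open Polynomial Matrix

lemma exists_orthProj {n : ℕ} (E : Submodule ℂ (Fin n → ℂ)) :
    ∃ P : Matrix (Fin n) (Fin n) ℂ, IsOrthProjOnto P E := by
  let E' : Submodule ℂ (EuclideanSpace ℂ (Fin n)) :=
    E.comap (WithLp.linearEquiv 2 ℂ (Fin n → ℂ)).toLinearMap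
  let S := E'.starProjection
  let Q : (Fin n → ℂ) →ₗ[ℂ] (Fin n → ℂ) := (WithLp.linearEquiv 2 ℂ (Fin n → ℂ)).toLinearMap ∘ₗ
    S.toLinearMap ∘ₗ (WithLp.linearEquiv 2 ℂ (Fin n → ℂ)).symm.toLinearMap
  have hQ : ∀ v, Q v = WithLp.ofLp (S (WithLp.toLp 2 v)) := fun v => rfl
  have hmv : ∀ v, (LinearMap.toMatrix' Q).mulVec v = Q v := fun v => by
    rw [← Matrix.toLin'_apply, Matrix.toLin'_toMatrix']
  refine ⟨LinearMap.toMatrix' Q, ?_, ?_, ?_, ?_⟩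
  · rw [← LinearMap.toMatrix'_comp]
    congr 1
    apply LinearMap.ext; intro v
    rw [LinearMap.comp_apply, hQ, hQ, WithLp.toLp_ofLp,
      Submodule.starProjection_eq_self_iff.mpr (E'.starProjection_apply_mem _)]
  · have hs : (LinearMap.toMatrix' Q).toEuclideanLin.IsSymmetric := by
      intro x y
      show inner ℂ (WithLp.toLp 2 ((LinearMap.toMatrix' Q).mulVec (WithLp.ofLp x))) y
        = inner ℂ x (WithLp.toLp 2 ((LinearMap.toMatrix' Q).mulVec (WithLp.ofLp y)))
      rw [hmv, hmv, hQ, hQ, WithLp.toLp_ofLp, WithLp.toLp_ofLp, WithLp.toLp_ofLp, WithLp.toLp_ofLp]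
      exact E'.starProjection_isSymmetric x y
    exact Matrix.isSymmetric_toEuclideanLin_iff.mp hs
  · intro v
    rw [hmv, hQ]
    exact E'.starProjection_apply_mem _
  · intro v hv
    rw [hmv, hQ, Submodule.starProjection_eq_self_iff.mpr (show WithLp.toLp 2 v ∈ E' from hv)]

lemma proj_unitary {n : ℕ} {P : Matrix (Fin n) (Fin n) ℂ} (h1 : P * P = P)
    (h2 : P.conjTranspose = P) {z : ℂ} (hz : ‖z‖ = 1) :
    z • P + (1 - P) ∈ Matrix.unitaryGroup (Fin n) ℂ := by
  have hzz : z * star z = 1 := by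
    rw [Complex.star_def, Complex.mul_conj]
    norm_cast
    rw [Complex.normSq_eq_norm_sq, hz]; norm_num
  rw [Matrix.mem_unitaryGroup_iff]
  have hstar : star (z • P + (1 - P)) = star z • P + (1 - P) := by
    simp [Matrix.star_eq_conjTranspose, h2, Matrix.conjTranspose_smul, Matrix.conjTranspose_sub]
  rw [hstar]
  have e1 : (1 - P) * P = 0 := by rw [sub_mul, one_mul, h1, sub_self]
  have e2 : P * (1 - P) = 0 := by rw [mul_sub, mul_one, h1, sub_self]
  have e3 : (1 - P) * (1 - P) = 1 - P := by rw [sub_mul, one_mul, mul_sub, mul_one, h1]; abel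
  calc (z • P + (1 - P)) * (star z • P + (1 - P))
      = (z * star z) • (P * P) + z • (P * (1-P)) + (star z • ((1-P) * P) + (1-P)*(1-P)) := by
        rw [add_mul, mul_add, mul_add, smul_mul_smul_comm, smul_mul_assoc, mul_smul_comm]
    _ = 1 := by rw [e1, e2, e3, hzz, h1, one_smul, smul_zero, smul_zero, add_zero, zero_add, add_sub_cancel]

lemma star_mem_unitary {n : ℕ} {A : Matrix (Fin n) (Fin n) ℂ}
    (h : A ∈ Matrix.unitaryGroup (Fin n) ℂ) : star A ∈ Matrix.unitaryGroup (Fin n) ℂ := by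
  rw [Matrix.mem_unitaryGroup_iff] at *
  rw [star_star]
  exact Matrix.mem_unitaryGroup_iff'.mp (Matrix.mem_unitaryGroup_iff.mpr h)

-- eval helpers
noncomputable def mEval {n : ℕ} (z : ℂ) :
    Matrix (Fin n) (Fin n) (Polynomial ℂ) →+* Matrix (Fin n) (Fin n) ℂ :=
  (Polynomial.evalRingHom z).mapMatrix

lemma mEval_apply {n : ℕ} (z : ℂ) (M : Matrix (Fin n) (Fin n) (Polynomial ℂ)) :
    mEval z M = M.map (Polynomial.eval z) := rfl

lemma eval_proj_poly {n : ℕ} (P : Matrix (Fin n) (Fin n) ℂ) (z : ℂ) :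
    ((X : ℂ[X]) • P.map (C : ℂ →+* ℂ[X]) + (1 - P.map (C : ℂ →+* ℂ[X]))).map (eval z)
      = z • P + (1 - P) := by
  ext a b
  by_cases hab : a = b <;> simp [Matrix.map_apply, Matrix.one_apply, hab] <;> ring

lemma eval_of_coeff {n : ℕ} (M : Matrix (Fin n) (Fin n) (Polynomial ℂ)) (d : ℕ)
    (h : ∀ a b, (M a b).natDegree ≤ d) (z : ℂ) :
    polyMat d (fun k => Matrix.of fun a b => (M a b).coeff k) z = M.map (Polynomial.eval z) := by
  ext a b
  rw [Matrix.map_apply, Polynomial.eval_eq_sum_range' (Nat.lt_succ_of_le (h a b))]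
  simp [polyMat, Matrix.sum_apply, mul_comm]

lemma key_s19 {n : ℕ} (W : Submodule ℂ (Fin n → ℂ)) :
    ∀ d (M : Matrix (Fin n) (Fin n) ℂ[X]), M.det.natDegree ≤ d →
    (∀ z : ℂ, ‖z‖ = 1 → M.map (eval z) ∈ Matrix.unitaryGroup (Fin n) ℂ) →
    M.map (eval 1) = 1 →
    ∃ (MB : Matrix (Fin n) (Fin n) ℂ[X]) (s : ℕ) (E : Fin s → Submodule ℂ (Fin n → ℂ))
      (P : Fin s → Matrix (Fin n) (Fin n) ℂ),
      (∀ k, IsOrthProjOnto (P k) (E k) ∧ E k ≤ W) ∧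
      (∀ z : ℂ, M.map (eval z)
        = MB.map (eval z) * (List.ofFn fun k => z • P k + (1 - P k)).prod) ∧
      (∀ z : ℂ, ‖z‖ = 1 → MB.map (eval z) ∈ Matrix.unitaryGroup (Fin n) ℂ) ∧
      MB.map (eval 1) = 1 ∧
      LinearMap.ker (Matrix.toLin' (MB.map (eval 0))) ⊓ W = ⊥ := by
  intro d
  induction d using Nat.strong_induction_on with
  | _ d IH =>
  intro M hd hU hI
  set A0 : Matrix (Fin n) (Fin n) ℂ := M.map (eval 0) with hA0
  by_cases hE : LinearMap.ker (Matrix.toLin' A0) ⊓ W = ⊥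
  · exact ⟨M, 0, Fin.elim0, Fin.elim0, fun k => k.elim0,
      fun z => by simp, hU, hI, hE⟩
  · obtain ⟨P, hP2, hPH, hPmem, hPfix⟩ := exists_orthProj (LinearMap.ker (Matrix.toLin' A0) ⊓ W)
    set E0 := LinearMap.ker (Matrix.toLin' A0) ⊓ W with hE0
    -- A0 * P = 0
    have hA0P : A0 * P = 0 := by
      have hv : ∀ v, (A0 * P).mulVec v = 0 := by
        intro v
        rw [← Matrix.mulVec_mulVec]
        have hm : P.mulVec v ∈ LinearMap.ker (Matrix.toLin' A0) := (hPmem v).1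
        rw [LinearMap.mem_ker, Matrix.toLin'_apply] at hm
        exact hm
      refine Matrix.ext fun a b => ?_
      simpa [Matrix.mulVec_single] using congrFun (hv (Pi.single b 1)) a
    set Pc : Matrix (Fin n) (Fin n) ℂ[X] := P.map (C : ℂ →+* ℂ[X]) with hPc
    have hPc2 : Pc * Pc = Pc := by
      rw [hPc, ← Matrix.map_mul, hP2]
    set Mdiv : Matrix (Fin n) (Fin n) ℂ[X] := Matrix.of (fun a b => (M a b).divX) with hMdiv
    have hMsplit : (X : ℂ[X]) • Mdiv + A0.map (C : ℂ →+* ℂ[X]) = M := by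
      refine Matrix.ext fun a b => ?_
      simp only [Matrix.add_apply, Matrix.smul_apply, Matrix.map_apply, hMdiv, Matrix.of_apply,
        smul_eq_mul, hA0, ← Polynomial.coeff_zero_eq_eval_zero]
      exact Polynomial.X_mul_divX_add _
    have hA0Pc : A0.map (C : ℂ →+* ℂ[X]) * Pc = 0 := by
      rw [hPc, ← Matrix.map_mul, hA0P]
      refine Matrix.ext fun a b => ?_; simp
    set MB : Matrix (Fin n) (Fin n) ℂ[X] := M * (1 - Pc) + Mdiv * Pc with hMB
    set pE : Matrix (Fin n) (Fin n) ℂ[X] := (X : ℂ[X]) • Pc + (1 - Pc) with hpE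
    have e1 : (1 - Pc) * Pc = 0 := by rw [sub_mul, one_mul, hPc2, sub_self]
    have e2 : Pc * (1 - Pc) = 0 := by rw [mul_sub, mul_one, hPc2, sub_self]
    have e3 : (1 - Pc) * (1 - Pc) = 1 - Pc := by
      rw [sub_mul, one_mul, mul_sub, mul_one, hPc2]; abel
    have hMPc : M * Pc = (X : ℂ[X]) • (Mdiv * Pc) := by
      rw [← hMsplit, add_mul, hA0Pc, add_zero, smul_mul_assoc]
    have t1 : M * (1 - Pc) * pE = M * (1 - Pc) := by
      rw [hpE, mul_add, mul_smul_comm, mul_assoc, e1, mul_zero, smul_zero, zero_add,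
        mul_assoc, e3]
    have t2 : Mdiv * Pc * pE = (X : ℂ[X]) • (Mdiv * Pc) := by
      rw [hpE, mul_add, mul_smul_comm, mul_assoc, hPc2, mul_assoc, e2, mul_zero, add_zero]
    have hfact : MB * pE = M := by
      rw [hMB, add_mul, t1, t2, ← hMPc, ← mul_add, sub_add_cancel, mul_one]
    have mm : ∀ (U V : Matrix (Fin n) (Fin n) ℂ[X]) (w : ℂ),
        (U * V).map (eval w) = U.map (eval w) * V.map (eval w) := fun U V w => by
      have h := Matrix.map_mul (L := U) (M := V) (f := Polynomial.evalRingHom w)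
      simpa [Polynomial.coe_evalRingHom] using h
    have detmap : ∀ (U : Matrix (Fin n) (Fin n) ℂ[X]) (w : ℂ),
        eval w U.det = (U.map (eval w)).det := fun U w => by
      have h := RingHom.map_det (Polynomial.evalRingHom w) U
      simpa [RingHom.mapMatrix_apply, Polynomial.coe_evalRingHom] using h
    have hevalfact : ∀ z : ℂ, M.map (eval z) = MB.map (eval z) * (z • P + (1 - P)) := by
      intro z
      rw [← eval_proj_poly P z, ← hPc, ← hpE, ← mm, hfact]
    -- unitarity of pE(z)
    have hpu : ∀ z : ℂ, ‖z‖ = 1 → z • P + (1 - P) ∈ Matrix.unitaryGroup (Fin n) ℂ :=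
      fun z hz => proj_unitary hP2 hPH hz
    have hMBu : ∀ z : ℂ, ‖z‖ = 1 → MB.map (eval z) ∈ Matrix.unitaryGroup (Fin n) ℂ := by
      intro z hz
      have h1 : MB.map (eval z) = M.map (eval z) * star (z • P + (1 - P)) := by
        rw [hevalfact z, mul_assoc, Matrix.mem_unitaryGroup_iff.mp (hpu z hz), mul_one]
      rw [h1]
      exact Submonoid.mul_mem _ (hU z hz) (star_mem_unitary (hpu z hz))
    have hMB1 : MB.map (eval 1) = 1 := by
      have := hevalfact 1
      rw [hI, one_smul, add_sub_cancel, mul_one] at this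
      exact this.symm
    -- determinant degree decreases
    have hdetfact : M.det = MB.det * pE.det := by rw [← hfact, Matrix.det_mul]
    have hMdet1 : eval 1 M.det = 1 := by
      rw [detmap, hI, Matrix.det_one]
    have hMdetne : M.det ≠ 0 := fun h => by simp [h] at hMdet1
    have hpE1 : eval 1 pE.det = 1 := by
      rw [detmap, hpE, hPc, eval_proj_poly P 1, one_smul, add_sub_cancel, Matrix.det_one]
    have hpE0 : eval 0 pE.det = 0 := by
      rw [detmap, hpE, hPc, eval_proj_poly P 0, zero_smul, zero_add]
      rw [← Matrix.exists_mulVec_eq_zero_iff]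
      obtain ⟨v, hvE, hvne⟩ := Submodule.ne_bot_iff E0 |>.mp hE
      refine ⟨v, hvne, ?_⟩
      rw [Matrix.sub_mulVec, Matrix.one_mulVec, hPfix v hvE, sub_self]
    have hpEne : pE.det ≠ 0 := fun h => by simp [h] at hpE1
    have hMBdetne : MB.det ≠ 0 := fun h => by rw [hdetfact, h, zero_mul] at hMdetne; exact hMdetne rfl
    have hpEdeg : 1 ≤ pE.det.natDegree := by
      by_contra hcon
      push_neg at hcon
      obtain ⟨c, hc⟩ := Polynomial.natDegree_eq_zero.mp (Nat.lt_one_iff.mp hcon)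
      rw [← hc] at hpE0 hpE1
      simp at hpE0 hpE1
      rw [hpE0] at hpE1
      exact one_ne_zero hpE1.symm
    have hlt : MB.det.natDegree < d := by
      have := Polynomial.natDegree_mul hMBdetne hpEne
      rw [← hdetfact] at this
      omega
    obtain ⟨MB', s, E', P', hproj', heval', hu', h1', hker'⟩ :=
      IH MB.det.natDegree hlt MB le_rfl hMBu hMB1
    refine ⟨MB', s + 1, Fin.snoc E' E0, Fin.snoc P' P, ?_, ?_, hu', h1', hker'⟩
    · intro k
      refine Fin.lastCases ?_ ?_ k
      · simp only [Fin.snoc_last]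
        exact ⟨⟨hP2, hPH, hPmem, hPfix⟩, inf_le_right⟩
      · intro i
        simp only [Fin.snoc_castSucc]
        exact hproj' i
    · intro z
      have hlist : (List.ofFn fun k : Fin (s+1) =>
          z • (Fin.snoc P' P : Fin (s+1) → Matrix (Fin n) (Fin n) ℂ) k
            + (1 - (Fin.snoc P' P : Fin (s+1) → Matrix (Fin n) (Fin n) ℂ) k)).prod
          = (List.ofFn fun k : Fin s => z • P' k + (1 - P' k)).prod * (z • P + (1 - P)) := by
        rw [List.ofFn_succ']
        simp only [Fin.snoc_castSucc, Fin.snoc_last, List.prod_concat]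
      rw [hlist, hevalfact z, heval' z, mul_assoc]


/-- Decompose `ℂⁿ = V ⊕ W` with `V` the span of the first `p` standard basis vectors and
`W` the span of the rest. Every matrix `A(z) = ∑_{i=0}^{N} A_i zⁱ` with polynomial entries,
unitary for `|z| = 1` and with `A(1) = I`, factors as `A(z) = B(z)·C(z)` where `B, C` have
polynomial entries, are unitary on the circle and equal `I` at `z = 1`; `C` is a finite
product of `p_{E}(z) = z • P_E + (1 - P_E)` with all subspaces `E ⊆ W`; and the constant
term `B₀ = B(0)` satisfies `ker B₀ ∩ W = 0`. -/
theorem polynomial_unitary_loop_partial_factorization (n p N : ℕ) (hp : p ≤ n)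
    (A : ℕ → Matrix (Fin n) (Fin n) ℂ)
    (hU : ∀ z : ℂ, ‖z‖ = 1 → polyMat N A z ∈ Matrix.unitaryGroup (Fin n) ℂ)
    (hI : polyMat N A 1 = 1) :
    ∃ (NB NC : ℕ) (B C : ℕ → Matrix (Fin n) (Fin n) ℂ),
      (∀ z : ℂ, polyMat N A z = polyMat NB B z * polyMat NC C z) ∧
      (∀ z : ℂ, ‖z‖ = 1 → polyMat NB B z ∈ Matrix.unitaryGroup (Fin n) ℂ ∧
        polyMat NC C z ∈ Matrix.unitaryGroup (Fin n) ℂ) ∧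
      polyMat NB B 1 = 1 ∧ polyMat NC C 1 = 1 ∧
      (∃ (s : ℕ) (E : Fin s → Submodule ℂ (Fin n → ℂ))
        (P : Fin s → Matrix (Fin n) (Fin n) ℂ),
        (∀ k, IsOrthProjOnto (P k) (E k) ∧ E k ≤ tailSubspace n p) ∧
        ∀ z : ℂ, polyMat NC C z = (List.ofFn fun k : Fin s => z • P k + (1 - P k)).prod) ∧
      LinearMap.ker (Matrix.toLin' (polyMat NB B 0)) ⊓ tailSubspace n p = ⊥ := by
  classical
  set W := tailSubspace n p with hW
  set MA : Matrix (Fin n) (Fin n) ℂ[X] :=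
    ∑ i ∈ Finset.range (N + 1), (X : ℂ[X]) ^ i • (A i).map (C : ℂ →+* ℂ[X]) with hMAdef
  have hMA : ∀ z : ℂ, MA.map (eval z) = polyMat N A z := by
    intro z
    refine Matrix.ext fun a b => ?_
    rw [Matrix.map_apply]
    have hent : MA a b = ∑ i ∈ Finset.range (N + 1), (X : ℂ[X]) ^ i * C (A i a b) := by
      simp [hMAdef, Matrix.sum_apply, Matrix.smul_apply, Matrix.map_apply, smul_eq_mul]
    rw [hent, Polynomial.eval_finset_sum]
    simp only [polyMat, Matrix.sum_apply, Matrix.smul_apply, smul_eq_mul, Polynomial.eval_mul,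
      Polynomial.eval_pow, Polynomial.eval_X, Polynomial.eval_C]
  obtain ⟨MB, s, E, P, hproj, hevalf, hBu, hB1, hker⟩ :=
    key_s19 W MA.det.natDegree MA le_rfl
      (fun z hz => by rw [hMA]; exact hU z hz)
      (by rw [hMA]; exact hI)
  set MC : Matrix (Fin n) (Fin n) ℂ[X] :=
    (List.ofFn fun k => (X : ℂ[X]) • (P k).map (C : ℂ →+* ℂ[X])
      + (1 - (P k).map (C : ℂ →+* ℂ[X]))).prod with hMCdef
  have h2 : ∀ Q : Matrix (Fin n) (Fin n) ℂ[X], ∀ z : ℂ,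
      Q.map (eval z) = (Polynomial.evalRingHom z).mapMatrix Q := fun Q z => rfl
  have hMC : ∀ z : ℂ, MC.map (eval z) = (List.ofFn fun k => z • P k + (1 - P k)).prod := by
    intro z
    rw [h2, hMCdef, map_list_prod, List.map_ofFn]
    refine congrArg List.prod (congrArg List.ofFn (funext fun k => ?_))
    show ((X : ℂ[X]) • (P k).map (C : ℂ →+* ℂ[X])
      + (1 - (P k).map (C : ℂ →+* ℂ[X]))).map (eval z)
      = z • P k + (1 - P k)
    exact eval_proj_poly _ _
  set NB := Finset.univ.sup fun ab : Fin n × Fin n => (MB ab.1 ab.2).natDegree with hNB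
  set NC := Finset.univ.sup fun ab : Fin n × Fin n => (MC ab.1 ab.2).natDegree with hNC
  set B : ℕ → Matrix (Fin n) (Fin n) ℂ := fun k => Matrix.of fun a b => (MB a b).coeff k with hB
  set Cc : ℕ → Matrix (Fin n) (Fin n) ℂ := fun k => Matrix.of fun a b => (MC a b).coeff k with hCc
  have hBeval : ∀ z : ℂ, polyMat NB B z = MB.map (eval z) := fun z =>
    eval_of_coeff MB NB (fun a b =>
      Finset.le_sup (f := fun ab : Fin n × Fin n => (MB ab.1 ab.2).natDegree)
        (Finset.mem_univ (a, b))) z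
  have hCeval : ∀ z : ℂ, polyMat NC Cc z = MC.map (eval z) := fun z =>
    eval_of_coeff MC NC (fun a b =>
      Finset.le_sup (f := fun ab : Fin n × Fin n => (MC ab.1 ab.2).natDegree)
        (Finset.mem_univ (a, b))) z
  refine ⟨NB, NC, B, Cc, ?_, ?_, ?_, ?_, ⟨s, E, P, hproj, ?_⟩, ?_⟩
  · intro z
    rw [hBeval, hCeval, ← hMA, hevalf z, hMC z]
  · intro z hz
    constructor
    · rw [hBeval]; exact hBu z hz
    · rw [hCeval, hMC]
      refine Submonoid.list_prod_mem _ fun x hx => ?_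
      obtain ⟨k, rfl⟩ := List.mem_ofFn.mp hx
      exact proj_unitary (hproj k).1.1 (hproj k).1.2.1 hz
  · rw [hBeval]; exact hB1
  · rw [hCeval, hMC]
    refine List.prod_eq_one fun x hx => ?_
    obtain ⟨k, rfl⟩ := List.mem_ofFn.mp hx
    show (1 : ℂ) • P k + (1 - P k) = 1
    rw [one_smul, add_sub_cancel]
  · intro z
    rw [hCeval, hMC]
  · rw [hBeval]; exact hker
end
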